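/- arXiv:2010.05992 — 9 statements merged into one kernel-verified Lean document; each statement's English description precedes it below -/
import Mathlib

section
/- Let r ≥ 3 and n ≥ 1, and let F be a family of vectors in {0,1}^n with |F| > (r−1)·2^⌈(r−2)n/(r−1)⌉. Then F contains r distinct vectors x⁽⁰⁾, x⁽¹⁾, …, x⁽ʳ⁻¹⁾ forming a focal family with focus x⁽⁰⁾. -/
/-- A family consisting of a focus vector `x₀` and `m` further vectors `xs 0, …, xs (m-1)`
in `α^n` is *focal with focus `x₀`* if for every coordinate `i`, at most one of the
vectors `xs j` differs from `x₀` at `i` (equivalently, at least `m - 1` of the `m`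
entries `xs j i` are equal to `x₀ i`). -/
def IsFocalWithFocus {α : Type*} {n m : ℕ} (x₀ : Fin n → α) (xs : Fin m → Fin n → α) : Prop :=
  ∀ i : Fin n, ∀ j j' : Fin m, xs j i ≠ x₀ i → xs j' i ≠ x₀ i → j = j'

/-- A family `F` of vectors contains a focal family of size `r` if there are `r`
distinct members `x₀, xs 0, …, xs (r-2)` of `F` that are focal with focus `x₀`. -/
def ContainsFocalFamily {α : Type*} {n : ℕ} (F : Finset (Fin n → α)) (r : ℕ) : Prop :=
  ∃ x₀ ∈ F, ∃ xs : Fin (r - 1) → Fin n → α,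
    (∀ j, xs j ∈ F) ∧ Function.Injective xs ∧ (∀ j, xs j ≠ x₀) ∧ IsFocalWithFocus x₀ xs

/-- If `F ⊆ {0,1}^n` has more than `(r-1)·2^⌈(r-2)n/(r-1)⌉` members, then `F` contains a
focal family of size `r`. -/
theorem focal_family_upper_bound (r n : ℕ) (hr : 3 ≤ r) (hn : 1 ≤ n)
    (F : Finset (Fin n → Bool))
    (hF : (r - 1) * 2 ^ ⌈(((r : ℚ) - 2) * n) / ((r : ℚ) - 1)⌉₊ < F.card) :
    ContainsFocalFamily F r := by
  classical
  set m := r - 1 with hm_def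
  have hm2 : 2 ≤ m := by omega
  set c := ⌈(((r : ℚ) - 2) * n) / ((r : ℚ) - 1)⌉₊ with hc_def
  have hn0 : 0 < n := hn
  have hm0 : 0 < m := by omega
  -- Key arithmetic: n - n / m ≤ c
  have hkey : n - n / m ≤ c := by
    have hqn : n / m * m + n % m = n := Nat.div_add_mod' n m
    have hmodlt : n % m < m := Nat.mod_lt n hm0
    have hdivlt : n / m < n := Nat.div_lt_self hn0 hm2
    have h1 : n - n / m - 1 < c := by
      rw [hc_def]
      rw [Nat.lt_ceil]
      have hrm : (r : ℚ) = (m : ℚ) + 1 := by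
        rw [hm_def]; push_cast [Nat.cast_sub (by omega : 1 ≤ r)]; ring
      have hmpos : (0 : ℚ) < (m : ℚ) - 1 + 1 := by
        have : (1 : ℚ) ≤ (m : ℚ) := by exact_mod_cast (by omega : 1 ≤ m)
        linarith
      rw [hrm]
      have hmq : (0 : ℚ) < (m : ℚ) := by exact_mod_cast hm0
      rw [show ((m : ℚ) + 1 - 1) = (m : ℚ) by ring, lt_div_iff₀ hmq]
      have hcast : ((n - n / m - 1 : ℕ) : ℚ) = (n : ℚ) - (n / m : ℕ) - 1 := by
        have : 1 ≤ n - n / m := by omega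
        push_cast [Nat.cast_sub (by omega : n / m ≤ n), Nat.cast_sub this]
        ring
      rw [hcast]
      have hlt : (n : ℚ) < ((n / m : ℕ) : ℚ) * (m : ℚ) + (m : ℚ) := by
        have : n < n / m * m + m := by omega
        exact_mod_cast this
      nlinarith [hlt]
    omega
  -- the projection killing block j
  set proj : Fin m → (Fin n → Bool) → (Fin n → Bool) :=
    fun j x i => if i.val % m = j.val then false else x i with hproj_def
  -- key property of proj
  have hproj_eq : ∀ (j : Fin m) (x y : Fin n → Bool), proj j x = proj j y →
      ∀ i : Fin n, x i ≠ y i → i.val % m = j.val := by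
    intro j x y h i hi
    by_contra hmod
    have := congrFun h i
    simp only [hproj_def, if_neg hmod] at this
    exact hi this
  -- the "alone" sets
  set A : Fin m → Finset (Fin n → Bool) :=
    fun j => F.filter (fun x => ∀ y ∈ F, proj j y = proj j x → y = x) with hA_def
  -- card bound for A j
  have hAcard : ∀ j, (A j).card ≤ 2 ^ c := by
    intro j
    set C : Finset (Fin n) := Finset.univ.filter (fun i => ¬ i.val % m = j.val) with hC_def
    set P : Finset (Fin n) := Finset.univ.filter (fun i => i.val % m = j.val) with hP_def
    have hPC : P.card + C.card = n := by
      rw [hP_def, hC_def, Finset.card_filter_add_card_filter_not,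
        Finset.card_univ, Fintype.card_fin]
    -- P has at least n/m elements
    have hPbig : n / m ≤ P.card := by
      have hmaps : ∀ t ∈ Finset.range (n / m),
          (if h : j.val + t * m < n then (⟨j.val + t * m, h⟩ : Fin n) else ⟨0, hn0⟩) ∈ P := by
        intro t ht
        rw [Finset.mem_range] at ht
        have hlt : j.val + t * m < n := by
          have hj : j.val < m := j.isLt
          have : t * m + m ≤ n / m * m := by
            have : t + 1 ≤ n / m := ht
            calc t * m + m = (t + 1) * m := by ring
            _ ≤ n / m * m := Nat.mul_le_mul_right m this
          have hdm : n / m * m ≤ n := Nat.div_mul_le_self n m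
          omega
        rw [dif_pos hlt, hP_def, Finset.mem_filter]
        refine ⟨Finset.mem_univ _, ?_⟩
        simp [Nat.add_mul_mod_self_right, Nat.mod_eq_of_lt j.isLt]
      have hinj : Set.InjOn
          (fun t => if h : j.val + t * m < n then (⟨j.val + t * m, h⟩ : Fin n) else ⟨0, hn0⟩)
          (Finset.range (n / m)) := by
        intro t ht t' ht' heq
        rw [Finset.coe_range, Set.mem_Iio] at ht ht'
        have hlt : j.val + t * m < n := by
          have hdm : n / m * m ≤ n := Nat.div_mul_le_self n m
          have : (t + 1) * m ≤ n / m * m := Nat.mul_le_mul_right m ht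
          have hj : j.val < m := j.isLt
          nlinarith
        have hlt' : j.val + t' * m < n := by
          have hdm : n / m * m ≤ n := Nat.div_mul_le_self n m
          have : (t' + 1) * m ≤ n / m * m := Nat.mul_le_mul_right m ht'
          have hj : j.val < m := j.isLt
          nlinarith
        simp only [dif_pos hlt, dif_pos hlt'] at heq
        have := congrArg Fin.val heq
        simp only at this
        have : t * m = t' * m := by omega
        exact Nat.eq_of_mul_eq_mul_right hm0 this
      have := Finset.card_le_card_of_injOn _ hmaps hinj
      simpa using this
    have hCsmall : C.card ≤ c := by omega
    -- injection from A j into functions on C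
    have hinj2 : Set.InjOn (fun (x : Fin n → Bool) (i : C) => x i.1) (A j) := by
      intro x hx y hy heq
      rw [Finset.mem_coe, hA_def, Finset.mem_filter] at hx hy
      have hpr : proj j x = proj j y := by
        funext i
        by_cases hmod : i.val % m = j.val
        · simp [hproj_def, hmod]
        · have hiC : i ∈ C := by
            rw [hC_def, Finset.mem_filter]; exact ⟨Finset.mem_univ _, hmod⟩
          have := congrFun heq ⟨i, hiC⟩
          simp only [hproj_def, if_neg hmod]
          exact this
      exact hy.2 x hx.1 hpr
    have hcard := Finset.card_le_card_of_injOn _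
      (fun x _ => Finset.mem_univ ((fun (y : Fin n → Bool) (i : C) => y i.1) x)) hinj2
    rw [Finset.card_univ, Fintype.card_fun, Fintype.card_coe, Fintype.card_bool] at hcard
    calc (A j).card ≤ 2 ^ C.card := hcard
    _ ≤ 2 ^ c := Nat.pow_le_pow_right (by norm_num) hCsmall
  -- there is x₀ in no A j
  have hex : ∃ x₀ ∈ F, ∀ j, x₀ ∉ A j := by
    by_contra h
    push_neg at h
    have hsub : F ⊆ Finset.univ.biUnion A := by
      intro x hx
      obtain ⟨j, hj⟩ := h x hx
      exact Finset.mem_biUnion.2 ⟨j, Finset.mem_univ _, hj⟩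
    have h1 : F.card ≤ ∑ j : Fin m, (A j).card :=
      le_trans (Finset.card_le_card hsub) (Finset.card_biUnion_le)
    have h2 : ∑ j : Fin m, (A j).card ≤ m * 2 ^ c := by
      calc ∑ j : Fin m, (A j).card ≤ ∑ _j : Fin m, 2 ^ c :=
            Finset.sum_le_sum (fun j _ => hAcard j)
      _ = m * 2 ^ c := by simp [Finset.sum_const, Finset.card_univ, mul_comm]
    omega
  obtain ⟨x₀, hx₀F, hx₀⟩ := hex
  have hx : ∀ j : Fin m, ∃ y, y ∈ F ∧ proj j y = proj j x₀ ∧ y ≠ x₀ := by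
    intro j
    have := hx₀ j
    rw [hA_def, Finset.mem_filter] at this
    push_neg at this
    obtain ⟨y, hyF, hyproj, hyne⟩ := this hx₀F
    exact ⟨y, hyF, hyproj, hyne⟩
  choose xs hxsF hxsproj hxsne using hx
  have hdiff : ∀ (j : Fin m) (i : Fin n), xs j i ≠ x₀ i → i.val % m = j.val :=
    fun j i hi => hproj_eq j (xs j) x₀ (hxsproj j) i hi
  refine ⟨x₀, hx₀F, xs, hxsF, ?_, hxsne, ?_⟩
  · intro j j' h
    by_contra hne
    apply hxsne j
    funext i
    by_contra hi
    have h1 := hdiff j i hi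
    have h2 := hdiff j' i (by rw [← h] at *; exact hi)
    exact hne (Fin.ext (h1 ▸ h2 ▸ rfl))
  · intro i j j' hj hj'
    have h1 := hdiff j i hj
    have h2 := hdiff j' i hj'
    exact Fin.ext (by omega)
end

section
/- Let r ≥ 3 and n ≥ 1, and let F be a family of subsets of [n] = {1,…,n} containing no near-sunflower of size r. Then |F| ≤ (r−1)·2^⌈(r−2)n/(r−1)⌉. -/
/-- A family `H` of `r` distinct subsets of `[n]` is a *near-sunflower of size `r`*
if every `i ∈ [n]` belongs to either `0`, `1`, `r-1` or `r` of the sets in `H`. -/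
def IsNearSunflower (n r : ℕ) (H : Finset (Finset (Fin n))) : Prop :=
  H.card = r ∧
  ∀ i : Fin n, (H.filter (fun A => i ∈ A)).card ∈ ({0, 1, r - 1, r} : Set ℕ)

/-!
Colour `[n]` by residues modulo `k = r - 1`; every colour class has at least `⌊n/k⌋` elements.
Call `A ∈ F` isolated for a class `C` if no other member of `F` agrees with `A` outside `C`;
isolated sets are determined by their trace outside `C`, so there are at most `2^(n - ⌊n/k⌋)`
of them per class. Hence if `|F| > k·2^(n - ⌊n/k⌋)`, some `A ∈ F` is isolated for no class:
for each class `C` there is `B_C ∈ F`, `B_C ≠ A`, agreeing with `A` outside `C`. The family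
`{A} ∪ {B_C}` then has `r` members, and an element of class `C` lies in `B_D` for every `D ≠ C`
exactly when it lies in `A`, so its degree is `0`, `1`, `r - 1` or `r`.
Finally `n - ⌊n/k⌋ ≤ ⌈(k - 1)n/k⌉`.
-/

open Finset

theorem Nat.sub_div_le_ceil (n k : ℕ) (hk : 0 < k) :
    n - n / k ≤ ⌈((k : ℚ) - 1) * n / k⌉₊ := by
  have hfloor : (n : ℚ) / k - 1 < (n / k : ℕ) := by
    rw [← Nat.floor_div_eq_div (K := ℚ)]
    exact Nat.sub_one_lt_floor _
  have hlt : ((n - n / k : ℕ) : ℚ) < ⌈((k : ℚ) - 1) * n / k⌉₊ + 1 :=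
    calc ((n - n / k : ℕ) : ℚ) = n - (n / k : ℕ) := by rw [Nat.cast_sub (Nat.div_le_self n k)]
      _ < ((k : ℚ) - 1) * n / k + 1 := by
        rw [sub_mul, sub_div, mul_div_cancel_left₀ _ (by positivity), one_mul]
        linarith
      _ ≤ _ := by gcongr; exact Nat.le_ceil _
  exact Nat.lt_add_one_iff.mp (by exact_mod_cast hlt)

theorem Fin.card_filter_val_mod_ne_le (n : ℕ) {k : ℕ} (i : Fin k) :
    #{x : Fin n | (x : ℕ) % k ≠ i} ≤ n - n / k := by
  have hk : 0 < k := i.pos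
  have hmap : ({x : Fin n | (x : ℕ) % k = i} : Finset (Fin n)).map Fin.valEmbedding =
      {x ∈ range n | x ≡ i [MOD k]} := by
    ext x
    simp only [mem_map, mem_filter, mem_univ, true_and, mem_range, Fin.valEmbedding_apply,
      Nat.ModEq, Nat.mod_eq_of_lt i.2]
    constructor
    · rintro ⟨a, h, rfl⟩
      exact ⟨a.2, h⟩
    · rintro ⟨hx, h⟩
      exact ⟨⟨x, hx⟩, h, rfl⟩
  have hclass : n / k ≤ #{x : Fin n | (x : ℕ) % k = i} := by
    rw [← card_map Fin.valEmbedding, hmap, ← Nat.count_eq_card_filter_range,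
      Nat.count_modEq_card n hk i]
    exact Nat.le_add_right _ _
  have hsplit := card_filter_add_card_filter_not (s := univ) (p := fun x : Fin n => x % k = i)
  simp only [card_univ, Fintype.card_fin] at hsplit
  simp only [ne_eq]
  omega

section

variable {α ι : Type*} [DecidableEq α]

theorem Finset.card_filter_forall_inter_eq_imp_eq_le (F : Finset (Finset α)) (s : Finset α) :
    #{A ∈ F | ∀ B ∈ F, B ∩ s = A ∩ s → B = A} ≤ 2 ^ #s := by
  rw [← card_powerset]
  refine card_le_card_of_injOn (· ∩ s) (fun A _ => mem_powerset.2 inter_subset_right) ?_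
  intro A hA B hB hAB
  exact (mem_filter.1 hB).2 A (mem_filter.1 hA).1 hAB

theorem Finset.exists_mem_forall_exists_ne_inter_eq [Fintype ι] (F : Finset (Finset α))
    (s : ι → Finset α) (hF : ∑ i, 2 ^ #(s i) < #F) :
    ∃ A ∈ F, ∀ i, ∃ B ∈ F, B ≠ A ∧ B ∩ s i = A ∩ s i := by
  by_contra! h
  have hcover :
      F ⊆ univ.biUnion fun i => {A ∈ F | ∀ B ∈ F, B ∩ s i = A ∩ s i → B = A} := by
    intro A hA
    obtain ⟨i, hi⟩ := h A hA
    exact mem_biUnion.2 ⟨i, mem_univ _,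
      mem_filter.2 ⟨hA, fun B hB hBA => by_contra fun hne => hi B hB hne hBA⟩⟩
  refine hF.not_ge ((card_le_card hcover).trans (card_biUnion_le.trans ?_))
  exact sum_le_sum fun i _ => card_filter_forall_inter_eq_imp_eq_le F (s i)

end

section

variable {α ι : Type*} {c : α → ι} {A : Finset α} {B : ι → Finset α}

theorem injective_of_forall_mem_iff (hBA : ∀ i, B i ≠ A)
    (hB : ∀ i x, c x ≠ i → (x ∈ B i ↔ x ∈ A)) : Function.Injective B := by
  intro i j hij
  by_contra hne
  refine hBA i (ext fun x => ?_)
  by_cases hx : c x = i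
  · rw [hij]
    exact hB j x (hx ▸ hne)
  · exact hB i x hx

variable [DecidableEq α] [Fintype ι]

theorem card_insert_image_of_forall_mem_iff (hBA : ∀ i, B i ≠ A)
    (hB : ∀ i x, c x ≠ i → (x ∈ B i ↔ x ∈ A)) :
    #(insert A (univ.image B)) = Fintype.card ι + 1 := by
  rw [card_insert_of_notMem (by simpa using hBA),
    card_image_of_injective _ (injective_of_forall_mem_iff hBA hB), card_univ]

theorem card_filter_mem_insert_image_of_forall_mem_iff [DecidableEq ι] (hBA : ∀ i, B i ≠ A)
    (hB : ∀ i x, c x ≠ i → (x ∈ B i ↔ x ∈ A)) (x : α) :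
    #{S ∈ insert A (univ.image B) | x ∈ S} =
      Fintype.card ι * (if x ∈ A then 1 else 0) + if x ∈ B (c x) then 1 else 0 := by
  have hA : A ∉ ({i | x ∈ B i} : Finset ι).image B := by simpa using fun i _ => hBA i
  have hcard : #{i | x ∈ B i} =
      (Fintype.card ι - 1) * (if x ∈ A then 1 else 0) + if x ∈ B (c x) then 1 else 0 := by
    rw [card_filter, Fintype.sum_eq_add_sum_compl (c x), add_comm,
      sum_congr rfl fun i hi =>
        if_congr (hB i x (Ne.symm (mem_compl.1 hi ∘ mem_singleton.2))) rfl rfl,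
      sum_const, card_compl, card_singleton, smul_eq_mul]
  have hpos : 0 < Fintype.card ι := Fintype.card_pos_iff.2 ⟨c x⟩
  rw [filter_insert, filter_image, apply_ite card, card_insert_of_notMem hA,
    card_image_of_injective _ (injective_of_forall_mem_iff hBA hB), hcard]
  split_ifs <;> grind

end

theorem isNearSunflower_insert_image {ι : Type*} [Fintype ι] [DecidableEq ι] {n : ℕ}
    {c : Fin n → ι} {A : Finset (Fin n)} {B : ι → Finset (Fin n)} (hBA : ∀ i, B i ≠ A)
    (hB : ∀ i x, c x ≠ i → (x ∈ B i ↔ x ∈ A)) :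
    IsNearSunflower n (Fintype.card ι + 1) (insert A (univ.image B)) := by
  refine ⟨card_insert_image_of_forall_mem_iff hBA hB, fun x => ?_⟩
  rw [card_filter_mem_insert_image_of_forall_mem_iff hBA hB]
  split_ifs <;> simp

theorem near_sunflower_upper_bound_general (r n : ℕ) (hr : 3 ≤ r)
    (F : Finset (Finset (Fin n)))
    (hF : ∀ H ⊆ F, ¬ IsNearSunflower n r H) :
    F.card ≤ (r - 1) * 2 ^ ⌈(((r : ℚ) - 2) * n) / ((r : ℚ) - 1)⌉₊ := by
  obtain ⟨k, rfl⟩ : ∃ k, r = k + 1 := ⟨r - 1, by omega⟩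
  have hk : 0 < k := by omega
  let c : Fin n → Fin k := fun x => ⟨x % k, Nat.mod_lt _ hk⟩
  have hclass (i : Fin k) : #{x | c x ≠ i} ≤ n - n / k := by
    simpa only [c, ne_eq, Fin.ext_iff] using Fin.card_filter_val_mod_ne_le n i
  by_contra! hlarge
  rw [Nat.add_sub_cancel, Nat.cast_succ, add_sub_cancel_right,
    show (k : ℚ) + 1 - 2 = k - 1 by ring] at hlarge
  have hsum : ∑ i, 2 ^ #{x | c x ≠ i} < #F := calc
    _ ≤ ∑ _i : Fin k, 2 ^ (n - n / k) :=
      sum_le_sum fun i _ => Nat.pow_le_pow_right two_pos (hclass i)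
    _ = k * 2 ^ (n - n / k) := by simp
    _ ≤ k * 2 ^ ⌈((k : ℚ) - 1) * n / k⌉₊ := by
      gcongr
      exacts [one_le_two, Nat.sub_div_le_ceil n k hk]
    _ < #F := hlarge
  obtain ⟨A, hA, hB⟩ := exists_mem_forall_exists_ne_inter_eq F _ hsum
  choose B hBF hBA hBA_inter using hB
  refine hF (insert A (univ.image B)) (insert_subset hA (image_subset_iff.2 fun i _ => hBF i)) ?_
  simpa only [Fintype.card_fin] using isNearSunflower_insert_image (c := c) hBA fun i x hx => by
    have h := Finset.ext_iff.1 (hBA_inter i) x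
    simp only [mem_inter, mem_filter, mem_univ, true_and] at h
    rwa [and_iff_left hx, and_iff_left hx] at h

/-- If `F` is a family of subsets of `[n]` containing no near-sunflower of size `r`,
then `|F| ≤ (r-1)·2^⌈(r-2)n/(r-1)⌉`. -/
theorem near_sunflower_upper_bound (r n : ℕ) (hr : 3 ≤ r) (hn : 1 ≤ n)
    (F : Finset (Finset (Fin n)))
    (hF : ∀ H ⊆ F, ¬ IsNearSunflower n r H) :
    F.card ≤ (r - 1) * 2 ^ ⌈(((r : ℚ) - 2) * n) / ((r : ℚ) - 1)⌉₊ :=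
  near_sunflower_upper_bound_general r n hr F hF
end

section
/- For every r ≥ 3 there exists a constant c > 0 such that for every n ≥ 1 there exists a family F of subsets of [n] = {1,…,n} containing no near-sunflower of size r with |F| ≥ c·(2/(r+1)^{1/(r−1)})^n. -/
/-!
Every element lies in `0`, `1`, `r - 1` or `r` members of a near-sunflower `{A_j}`, so its
membership pattern `j ↦ (i ∈ A_j)` is a constant pattern changed in at most one place. Hence
`A_j = B ∆ {i | o i = some j}` for some `B ⊆ [n]` and `o : [n] → Option (Fin r)`, and there
are at most `2^n (r+1)^n` near-sunflowers. A random `k`-subset of the `N = 2^n` sets contains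
on average at most `2^n (r+1)^n (k/N)^r` of them; deleting one set from each leaves at least
`k/2` sets once `k ≤ x/4`, where `x = (2/(r+1)^(1/(r-1)))^n`.
-/

open Finset
open scoped symmDiff

theorem Nat.descFactorial_mul_pow_le_descFactorial_mul_pow {k N : ℕ} (hkN : k ≤ N) (r : ℕ) :
    k.descFactorial r * N ^ r ≤ N.descFactorial r * k ^ r := by
  induction r with
  | zero => simp
  | succ r ih =>
    have hstep : (k - r) * N ≤ (N - r) * k := by
      rw [Nat.sub_mul, Nat.sub_mul, mul_comm N k]
      exact Nat.sub_le_sub_left (Nat.mul_le_mul_left r hkN) _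
    calc k.descFactorial (r + 1) * N ^ (r + 1)
        = ((k - r) * N) * (k.descFactorial r * N ^ r) := by
          rw [Nat.descFactorial_succ, pow_succ]; ring
      _ ≤ ((N - r) * k) * (N.descFactorial r * k ^ r) := Nat.mul_le_mul hstep ih
      _ = N.descFactorial (r + 1) * k ^ (r + 1) := by
          rw [Nat.descFactorial_succ, pow_succ]; ring

theorem Nat.choose_mul_pow_le_choose_mul_pow {k N : ℕ} (hkN : k ≤ N) (r : ℕ) :
    k.choose r * N ^ r ≤ N.choose r * k ^ r := by
  refine Nat.le_of_mul_le_mul_left ?_ r.factorial_pos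
  simpa only [Nat.descFactorial_eq_factorial_mul_choose, mul_assoc] using
    Nat.descFactorial_mul_pow_le_descFactorial_mul_pow hkN r

namespace Finset

theorem exists_mem_iff_eq_some_of_card_le_one {α : Type*} {s : Finset α} (hs : #s ≤ 1) :
    ∃ o : Option α, ∀ a, a ∈ s ↔ o = some a := by
  rcases Nat.le_one_iff_eq_zero_or_eq_one.1 hs with hs | hs
  · exact ⟨none, by simp [card_eq_zero.1 hs]⟩
  · obtain ⟨b, rfl⟩ := card_eq_one.1 hs
    exact ⟨some b, by simp [eq_comm]⟩

theorem exists_mem_iff_ne_some_of_card_le_one_or {α : Type*} [Fintype α] [DecidableEq α]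
    {s : Finset α} (hs : #s ≤ 1 ∨ #sᶜ ≤ 1) :
    ∃ (b : Bool) (o : Option α), ∀ a, a ∈ s ↔ (b ↔ o ≠ some a) := by
  rcases hs with hs | hs
  · obtain ⟨o, ho⟩ := exists_mem_iff_eq_some_of_card_le_one hs
    exact ⟨false, o, by simpa using ho⟩
  · obtain ⟨o, ho⟩ := exists_mem_iff_eq_some_of_card_le_one hs
    exact ⟨true, o, fun a => by simpa using not_congr (ho a)⟩

theorem exists_subset_forall_not_subset_card_le_card_add {α : Type*} [DecidableEq α]
    (S : Finset α) {𝓗 : Finset (Finset α)} (h𝓗 : ∀ H ∈ 𝓗, H.Nonempty) :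
    ∃ F ⊆ S, (∀ H ∈ 𝓗, ¬ H ⊆ F) ∧ #S ≤ #F + #(𝓗.filter (· ⊆ S)) := by
  choose pick hpick using h𝓗
  set bad := 𝓗.filter (· ⊆ S)
  let picked := bad.attach.image fun H => pick H.1 (mem_filter.1 H.2).1
  refine ⟨S \ picked, sdiff_subset, fun H hH hHF => ?_, ?_⟩
  · have hbad : H ∈ bad := mem_filter.2 ⟨hH, hHF.trans sdiff_subset⟩
    exact (mem_sdiff.1 (hHF (hpick H hH))).2 (mem_image.2 ⟨⟨H, hbad⟩, mem_attach _ _, rfl⟩)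
  · have := le_card_sdiff picked S
    have : #picked ≤ #bad := card_image_le.trans card_attach.le
    omega

variable {α : Type*} [Fintype α] [DecidableEq α] {𝓗 : Finset (Finset α)} {r k : ℕ}

theorem exists_card_eq_card_filter_subset_mul_choose_le (h𝓗 : ∀ H ∈ 𝓗, #H = r)
    (hrk : r ≤ k) (hk : k ≤ Fintype.card α) :
    ∃ S : Finset α, #S = k ∧
      #(𝓗.filter (· ⊆ S)) * (Fintype.card α).choose k ≤
        #𝓗 * (Fintype.card α - r).choose (k - r) := by
  set P := (univ : Finset α).powersetCard k
  have hP : #P = (Fintype.card α).choose k := by simp [P]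
  have hdouble :
      ∑ S ∈ P, #(𝓗.filter (· ⊆ S)) = #𝓗 * (Fintype.card α - r).choose (k - r) := by
    calc ∑ S ∈ P, #(𝓗.filter (· ⊆ S)) = ∑ H ∈ 𝓗, #(P.filter (H ⊆ ·)) := by
          simp_rw [card_filter]; exact sum_comm
      _ = ∑ _H ∈ 𝓗, (Fintype.card α - r).choose (k - r) := by
          refine sum_congr rfl fun H hH => ?_
          rw [card_filter_powersetCard_subset H univ k (subset_univ H) (h𝓗 H hH ▸ hrk),
            card_univ, h𝓗 H hH]
      _ = _ := by rw [sum_const, smul_eq_mul]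
  obtain ⟨S, hS, hle⟩ := exists_le_of_sum_le (s := P)
    (f := fun S => #(𝓗.filter (· ⊆ S)) * (Fintype.card α).choose k)
    (g := fun _ => #𝓗 * (Fintype.card α - r).choose (k - r))
    (powersetCard_nonempty.2 (by simpa using hk))
    (by rw [← sum_mul, hdouble, sum_const, smul_eq_mul, hP, mul_comm])
  exact ⟨S, (mem_powersetCard.1 hS).2, hle⟩

theorem exists_card_eq_card_filter_subset_mul_pow_le (h𝓗 : ∀ H ∈ 𝓗, #H = r)
    (hk : k ≤ Fintype.card α) :
    ∃ S : Finset α, #S = k ∧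
      #(𝓗.filter (· ⊆ S)) * Fintype.card α ^ r ≤ #𝓗 * k ^ r := by
  set N := Fintype.card α
  rcases lt_or_ge k r with hkr | hrk
  · obtain ⟨S, -, hS⟩ := exists_subset_card_eq (s := (univ : Finset α)) (by simpa using hk)
    refine ⟨S, hS, ?_⟩
    have : 𝓗.filter (· ⊆ S) = ∅ :=
      filter_eq_empty_iff.2 fun H hH hHS => by have := card_le_card hHS; grind
    simp [this]
  obtain ⟨S, hS, hle⟩ := exists_card_eq_card_filter_subset_mul_choose_le h𝓗 hrk hk
  refine ⟨S, hS, ?_⟩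
  have hpos : 0 < (N - r).choose (k - r) := Nat.choose_pos (by omega)
  have hpos' : 0 < N.choose r := Nat.choose_pos (by omega)
  have hchoose : #(𝓗.filter (· ⊆ S)) * N.choose r ≤ #𝓗 * k.choose r := by
    refine Nat.le_of_mul_le_mul_right ?_ hpos
    calc #(𝓗.filter (· ⊆ S)) * N.choose r * (N - r).choose (k - r)
        = #(𝓗.filter (· ⊆ S)) * N.choose k * k.choose r := by
          rw [mul_assoc, ← Nat.choose_mul hrk, mul_assoc]
      _ ≤ #𝓗 * (N - r).choose (k - r) * k.choose r := Nat.mul_le_mul_right _ hle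
      _ = #𝓗 * k.choose r * (N - r).choose (k - r) := by ring
  refine Nat.le_of_mul_le_mul_right ?_ hpos'
  calc #(𝓗.filter (· ⊆ S)) * N ^ r * N.choose r
      = #(𝓗.filter (· ⊆ S)) * N.choose r * N ^ r := by ring
    _ ≤ #𝓗 * k.choose r * N ^ r := Nat.mul_le_mul_right _ hchoose
    _ ≤ #𝓗 * (N.choose r * k ^ r) := by
        rw [mul_assoc]; exact Nat.mul_le_mul_left _ (Nat.choose_mul_pow_le_choose_mul_pow hk r)
    _ = #𝓗 * k ^ r * N.choose r := by ring

theorem exists_forall_not_subset_card_mul_pow_le (h𝓗 : ∀ H ∈ 𝓗, #H = r) (hr : 0 < r)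
    (hk : k ≤ Fintype.card α) :
    ∃ F : Finset α, (∀ H ∈ 𝓗, ¬ H ⊆ F) ∧
      k * Fintype.card α ^ r ≤ #F * Fintype.card α ^ r + #𝓗 * k ^ r := by
  obtain ⟨S, rfl, hS⟩ := exists_card_eq_card_filter_subset_mul_pow_le h𝓗 hk
  obtain ⟨F, -, hF, hcard⟩ := exists_subset_forall_not_subset_card_le_card_add S
    fun H hH => card_pos.1 (h𝓗 H hH ▸ hr)
  refine ⟨F, hF, ?_⟩
  calc #S * Fintype.card α ^ r
      ≤ (#F + #(𝓗.filter (· ⊆ S))) * Fintype.card α ^ r := Nat.mul_le_mul_right _ hcard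
    _ ≤ #F * Fintype.card α ^ r + #𝓗 * #S ^ r := by rw [add_mul]; omega

end Finset

def symmDiffFamily {n r : ℕ} (B : Finset (Fin n)) (o : Fin n → Option (Fin r)) :
    Finset (Finset (Fin n)) :=
  univ.image fun j => B ∆ univ.filter (o · = some j)

theorem IsNearSunflower.exists_symmDiffFamily_eq {n r : ℕ} {H : Finset (Finset (Fin n))}
    (hH : IsNearSunflower n r H) : ∃ B o, symmDiffFamily (r := r) B o = H := by
  obtain ⟨hcard, hdeg⟩ := hH
  let e : H ≃ Fin r := Fintype.equivFinOfCardEq (by simp [hcard])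
  let A : Fin r → Finset (Fin n) := fun j => e.symm j
  have hA : Function.Injective A := fun j j' h => e.symm.injective (Subtype.ext h)
  have himage : univ.image A = H := by
    ext X
    refine ⟨fun hX => ?_, fun hX => mem_image.2 ⟨e ⟨X, hX⟩, mem_univ _, by simp [A]⟩⟩
    obtain ⟨j, -, rfl⟩ := mem_image.1 hX
    exact (e.symm j).2
  have hrow :
      ∀ i, ∃ (b : Bool) (o : Option (Fin r)), ∀ j, i ∈ A j ↔ (b ↔ o ≠ some j) := by
    intro i
    have hi := hdeg i
    rw [← himage, filter_image, card_image_of_injective _ hA] at hi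
    refine exists_mem_iff_ne_some_of_card_le_one_or (s := univ.filter (i ∈ A ·)) ?_ |>.imp
      fun b ⟨o, ho⟩ => ⟨o, fun j => by simpa using ho j⟩
    simp only [Set.mem_insert_iff, Set.mem_singleton_iff] at hi
    rw [card_compl, Fintype.card_fin]
    omega
  choose b o hbo using hrow
  refine ⟨univ.filter (b · = true), o, ?_⟩
  rw [← himage, symmDiffFamily]
  congr 1
  ext j i
  simp only [hbo, mem_symmDiff, mem_filter, mem_univ, true_and]
  tauto

theorem forall_subset_not_isNearSunflower_of_card_lt {n r : ℕ} {F : Finset (Finset (Fin n))}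
    (hF : #F < r) : ∀ H ⊆ F, ¬ IsNearSunflower n r H :=
  fun _ hH hNS => (card_le_card hH).not_gt (hNS.1 ▸ hF)

open Classical in
theorem card_filter_isNearSunflower_le (n r : ℕ) :
    #(univ.filter (IsNearSunflower n r)) ≤ 2 ^ n * (r + 1) ^ n := by
  calc #(univ.filter (IsNearSunflower n r))
      ≤ #(univ.image fun Bo : Finset (Fin n) × (Fin n → Option (Fin r)) =>
          symmDiffFamily Bo.1 Bo.2) := by
        refine card_le_card fun H hH => ?_
        obtain ⟨B, o, rfl⟩ := (mem_filter.1 hH).2.exists_symmDiffFamily_eq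
        exact mem_image.2 ⟨(B, o), mem_univ _, rfl⟩
    _ ≤ 2 ^ n * (r + 1) ^ n := card_image_le.trans (by simp)

theorem rpow_one_div_sub_one_pow {r : ℕ} (hr : 2 ≤ r) :
    (((r : ℝ) + 1) ^ ((1 : ℝ) / ((r : ℝ) - 1))) ^ (r - 1) = r + 1 := by
  have hcast : ((r - 1 : ℕ) : ℝ) = (r : ℝ) - 1 := by rw [Nat.cast_sub (by omega)]; simp
  rw [one_div, ← hcast]
  exact Real.rpow_inv_natCast_pow (by positivity) (by omega)

theorem two_mul_two_pow_mul_pow_le {p : ℝ} {r n k : ℕ} (hr : 2 ≤ r)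
    (hp : p ^ (r - 1) = r + 1) (hk : (k : ℝ) ≤ (2 / p) ^ n / 4) :
    2 * (2 ^ n * (r + 1) ^ n) * k ^ r ≤ k * (2 ^ n) ^ r := by
  set x := (2 / p) ^ n
  have hx : x ^ (r - 1) * ((r : ℝ) + 1) ^ n = ((2 : ℝ) ^ n) ^ (r - 1) := by
    rw [← pow_mul, mul_comm n, pow_mul, div_pow, hp, ← mul_pow,
      div_mul_cancel₀ _ (by positivity), ← pow_mul, ← pow_mul, mul_comm]
  have h4 : (2 : ℝ) ≤ 4 ^ (r - 1) :=
    le_trans (by norm_num) (le_self_pow₀ (by norm_num) (by omega))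
  have hr' : r = r - 1 + 1 := by omega
  rw [← Nat.cast_le (α := ℝ)]
  push_cast
  calc 2 * (2 ^ n * ((r : ℝ) + 1) ^ n) * (k : ℝ) ^ r
      = 2 * 2 ^ n * (((r : ℝ) + 1) ^ n * (k : ℝ) ^ (r - 1)) * k := by
        rw [show (k : ℝ) ^ r = (k : ℝ) ^ (r - 1) * k by rw [← pow_succ, ← hr']]
        ring
    _ ≤ 2 * 2 ^ n * (((r : ℝ) + 1) ^ n * (x / 4) ^ (r - 1)) * k := by gcongr
    _ = 2 / 4 ^ (r - 1) * (2 ^ n * (2 ^ n) ^ (r - 1)) * k := by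
        rw [div_pow, ← hx]; ring
    _ ≤ 1 * (2 ^ n * (2 ^ n) ^ (r - 1)) * k := by
        gcongr
        exact (div_le_one (by positivity)).2 h4
    _ = k * ((2 : ℝ) ^ n) ^ r := by
        rw [one_mul, ← pow_succ', ← hr']; ring

theorem exists_forall_subset_not_isNearSunflower_le_two_mul_card {p : ℝ} {r n k : ℕ}
    (hr : 2 ≤ r) (hp : p ^ (r - 1) = r + 1) (hk : (k : ℝ) ≤ (2 / p) ^ n / 4) (hkN : k ≤ 2 ^ n) :
    ∃ F : Finset (Finset (Fin n)), (∀ H ⊆ F, ¬ IsNearSunflower n r H) ∧ k ≤ 2 * #F := by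
  classical
  obtain ⟨F, hF, hcard⟩ := exists_forall_not_subset_card_mul_pow_le
    (𝓗 := univ.filter (IsNearSunflower n r)) (fun H hH => (mem_filter.1 hH).2.1) (by omega)
    (k := k) (by simpa using hkN)
  refine ⟨F, fun H hHF hH => hF H (mem_filter.2 ⟨mem_univ _, hH⟩) hHF, ?_⟩
  simp only [Fintype.card_finset, Fintype.card_fin] at hcard
  have hM := Nat.mul_le_mul_right (k ^ r) (card_filter_isNearSunflower_le n r)
  have hnum := two_mul_two_pow_mul_pow_le hr hp hk
  exact Nat.le_of_mul_le_mul_right (show k * (2 ^ n) ^ r ≤ 2 * #F * (2 ^ n) ^ r by linarith)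
    (by positivity)

/-- For every `r ≥ 3` there is `c > 0` such that for every `n ≥ 1` there is a family of
subsets of `[n]` with no near-sunflower of size `r` of cardinality at least
`c·(2/(r+1)^(1/(r-1)))^n`. -/
theorem near_sunflower_lower_bound (r : ℕ) (hr : 3 ≤ r) :
    ∃ c : ℝ, 0 < c ∧ ∀ n : ℕ, 1 ≤ n →
      ∃ F : Finset (Finset (Fin n)),
        (∀ H ⊆ F, ¬ IsNearSunflower n r H) ∧
        c * (2 / ((r : ℝ) + 1) ^ ((1 : ℝ) / ((r : ℝ) - 1))) ^ n ≤ (F.card : ℝ) := by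
  refine ⟨1 / 16, by norm_num, fun n _ => ?_⟩
  have hp := rpow_one_div_sub_one_pow (r := r) (by omega)
  set p := ((r : ℝ) + 1) ^ ((1 : ℝ) / ((r : ℝ) - 1))
  have hr' : (3 : ℝ) ≤ r := by exact_mod_cast hr
  have hp1 : 1 ≤ p := Real.one_le_rpow (by linarith) (div_nonneg zero_le_one (by linarith))
  set x := (2 / p) ^ n
  rcases lt_or_ge x 8 with hx | hx
  · refine ⟨{∅}, forall_subset_not_isNearSunflower_of_card_lt ?_, ?_⟩
    · rw [card_singleton]; omega
    · simp only [card_singleton, Nat.cast_one]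
      linarith
  set k := ⌊x / 4⌋₊
  have hkx : (k : ℝ) ≤ x / 4 := Nat.floor_le (by positivity)
  have hxk : x / 8 ≤ k := by have := Nat.lt_floor_add_one (x / 4); linarith
  have hx2 : x ≤ 2 ^ n := pow_le_pow_left₀ (by positivity) (div_le_self zero_le_two hp1) n
  obtain ⟨F, hF, hkF⟩ := exists_forall_subset_not_isNearSunflower_le_two_mul_card (by omega) hp
    hkx (k := k) (by exact_mod_cast (show (k : ℝ) ≤ 2 ^ n by linarith))
  refine ⟨F, hF, ?_⟩
  have : (k : ℝ) ≤ 2 * #F := by exact_mod_cast hkF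
  linarith
end

section
/- For r ≥ 3 and n ≥ 1, the number of unordered r-element families of distinct subsets of [n] that form a near-sunflower of size r is at most (2r+2)^n / r!. -/
attribute [local instance] Classical.propDecidable

lemma card_filter_card_eq (r k : ℕ) :
    ((Finset.univ : Finset (Finset (Fin r))).filter (fun s => s.card = k)).card
      = r.choose k := by
  rw [← Finset.powerset_univ, ← Finset.powersetCard_eq_filter, Finset.card_powersetCard,
    Finset.card_univ, Fintype.card_fin]

/-- The set of subsets of `Fin r` with cardinality in `{0, 1, r-1, r}` has size at most
`2r + 2`. -/
lemma card_goodSets_le (r : ℕ) (hr : 1 ≤ r) :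
    Fintype.card {s : Finset (Fin r) // s.card ∈ ({0, 1, r - 1, r} : Set ℕ)}
      ≤ 2 * r + 2 := by
  rw [Fintype.card_subtype]
  have : (Finset.univ.filter
      (fun s : Finset (Fin r) => s.card ∈ ({0, 1, r - 1, r} : Set ℕ)))
      ⊆ (Finset.univ.filter (fun s : Finset (Fin r) => s.card = 0))
        ∪ (Finset.univ.filter (fun s : Finset (Fin r) => s.card = 1))
        ∪ (Finset.univ.filter (fun s : Finset (Fin r) => s.card = r - 1))
        ∪ (Finset.univ.filter (fun s : Finset (Fin r) => s.card = r)) := by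
    intro s hs
    simp only [Finset.mem_filter, Set.mem_insert_iff, Set.mem_singleton_iff] at hs
    simp only [Finset.mem_union, Finset.mem_filter, Finset.mem_univ, true_and]
    tauto
  calc _ ≤ _ := Finset.card_le_card this
    _ ≤ _ := le_trans (Finset.card_union_le _ _)
        (add_le_add (le_trans (Finset.card_union_le _ _)
          (add_le_add (Finset.card_union_le _ _) le_rfl)) le_rfl)
    _ ≤ 2 * r + 2 := by
        rw [card_filter_card_eq, card_filter_card_eq, card_filter_card_eq,
          card_filter_card_eq, Nat.choose_zero_right, Nat.choose_one_right,
          Nat.choose_self, Nat.choose_symm_of_eq_add (by omega : r = (r - 1) + 1),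
          Nat.choose_one_right]
        omega

/-- A canonical enumeration of an `r`-element finset. -/
noncomputable def famEquiv {α : Type*} {r : ℕ} (H : Finset α) (h : H.card = r) :
    Fin r ≃ ↥H :=
  (Fintype.equivFinOfCardEq ((Fintype.card_coe H).trans h)).symm

lemma key_count (r n : ℕ) (hr : 3 ≤ r) :
    Fintype.card {H : Finset (Finset (Fin n)) // IsNearSunflower n r H} * r.factorial
      ≤ (2 * r + 2) ^ n := by
  classical
  set S := {s : Finset (Fin r) // s.card ∈ ({0, 1, r - 1, r} : Set ℕ)}
  -- the encoding map
  have main : Fintype.card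
      ({H : Finset (Finset (Fin n)) // IsNearSunflower n r H} × Equiv.Perm (Fin r))
      ≤ Fintype.card (Fin n → S) := by
    apply Fintype.card_le_of_injective
      (fun p => fun i => ⟨Finset.univ.filter
        (fun j => i ∈ (famEquiv p.1.1 p.1.2.1 (p.2 j) : Finset (Fin n))), by
          have hcard : (Finset.univ.filter
              (fun j => i ∈ (famEquiv p.1.1 p.1.2.1 (p.2 j) : Finset (Fin n)))).card
              = (p.1.1.filter (fun A => i ∈ A)).card := by
            apply Finset.card_bij
              (fun j _ => (famEquiv p.1.1 p.1.2.1 (p.2 j) : Finset (Fin n)))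
            · intro j hj
              simp only [Finset.mem_filter] at hj ⊢
              exact ⟨(famEquiv p.1.1 p.1.2.1 (p.2 j)).2, hj.2⟩
            · intro j₁ h₁ j₂ h₂ h
              have := Subtype.ext h
              exact p.2.injective ((famEquiv p.1.1 p.1.2.1).injective this)
            · intro A hA
              simp only [Finset.mem_filter] at hA
              obtain ⟨j, hj⟩ := (famEquiv p.1.1 p.1.2.1).surjective ⟨A, hA.1⟩
              refine ⟨p.2.symm j, ?_, ?_⟩
              · simp only [Finset.mem_filter, Finset.mem_univ, true_and,
                  Equiv.apply_symm_apply, hj]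
                exact hA.2
              · simp [hj]
          rw [hcard]
          exact p.1.2.2 i⟩)
    intro p q hpq
    -- first : the ordered families agree
    have hsets : ∀ j : Fin r,
        (famEquiv p.1.1 p.1.2.1 (p.2 j) : Finset (Fin n))
          = (famEquiv q.1.1 q.1.2.1 (q.2 j) : Finset (Fin n)) := by
      intro j
      ext i
      have := congrFun hpq i
      have h2 := congrArg (fun s : S => j ∈ s.1) this
      simpa [Finset.mem_filter] using h2
    -- hence the underlying families agree
    have hH : p.1.1 = q.1.1 := by
      ext A
      constructor
      · intro hA
        obtain ⟨j, hj⟩ := (famEquiv p.1.1 p.1.2.1).surjective ⟨A, hA⟩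
        obtain ⟨j', hj'⟩ := p.2.surjective j
        have : A = (famEquiv q.1.1 q.1.2.1 (q.2 j') : Finset (Fin n)) := by
          rw [← hsets j', hj', hj]
        rw [this]; exact (famEquiv q.1.1 q.1.2.1 (q.2 j')).2
      · intro hA
        obtain ⟨j, hj⟩ := (famEquiv q.1.1 q.1.2.1).surjective ⟨A, hA⟩
        obtain ⟨j', hj'⟩ := q.2.surjective j
        have : A = (famEquiv p.1.1 p.1.2.1 (p.2 j') : Finset (Fin n)) := by
          rw [hsets j', hj', hj]
        rw [this]; exact (famEquiv p.1.1 p.1.2.1 (p.2 j')).2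
    obtain ⟨⟨H, hH1⟩, σ⟩ := p
    obtain ⟨⟨H', hH1'⟩, σ'⟩ := q
    simp only at hH hsets
    subst hH
    have hσ : σ = σ' := by
      apply Equiv.ext; intro j
      have := hsets j
      exact (famEquiv H hH1.1).injective (Subtype.ext this)
    simp [hσ]
  rw [Fintype.card_prod, Fintype.card_perm, Fintype.card_fin] at main
  rw [Fintype.card_fun, Fintype.card_fin] at main
  calc _ ≤ Fintype.card S ^ n := main
    _ ≤ (2 * r + 2) ^ n := Nat.pow_le_pow_left (card_goodSets_le r (by omega)) n

/-- The number of (unordered) `r`-element families of distinct subsets of `[n]` that form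
a near-sunflower of size `r` is at most `(2r+2)^n / r!`. -/
theorem count_near_sunflowers (r n : ℕ) (hr : 3 ≤ r) (hn : 1 ≤ n) :
    (Nat.card {H : Finset (Finset (Fin n)) // IsNearSunflower n r H} : ℝ)
      ≤ (2 * (r : ℝ) + 2) ^ n / (Nat.factorial r : ℝ) := by
  classical
  have hkey := key_count r n hr
  rw [Nat.card_eq_fintype_card]
  rw [le_div_iff₀ (by positivity)]
  have : (2 * (r : ℝ) + 2) ^ n = ((2 * r + 2 : ℕ) : ℝ) ^ n := by push_cast; ring
  rw [this]
  exact_mod_cast hkey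
end

section
/- For r ≥ 3 and n ≥ 1, the number of focal families of size r in {0,1}^n — that is, pairs consisting of a focus vector x⁽⁰⁾ and an unordered set of r−1 further distinct vectors {x⁽¹⁾, …, x⁽ʳ⁻¹⁾} (all r vectors distinct) such that x⁽⁰⁾, x⁽¹⁾, …, x⁽ʳ⁻¹⁾ is focal with focus x⁽⁰⁾ — is at most (2r)^n / (r−1)!. -/
open Function

theorem focal_aux (r n : ℕ) (hr : 3 ≤ r) :
    Nat.card {p : (Fin n → Bool) × Finset (Fin n → Bool) //
        p.2.card = r - 1 ∧ p.1 ∉ p.2 ∧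
        ∀ i : Fin n, ∀ y ∈ p.2, ∀ y' ∈ p.2,
          y i ≠ p.1 i → y' i ≠ p.1 i → y = y'} * Nat.factorial (r - 1)
      ≤ (2 * r) ^ n := by
  classical
  set T := {p : (Fin n → Bool) × Finset (Fin n → Bool) //
        p.2.card = r - 1 ∧ p.1 ∉ p.2 ∧
        ∀ i : Fin n, ∀ y ∈ p.2, ∀ y' ∈ p.2,
          y i ≠ p.1 i → y' i ≠ p.1 i → y = y'} with hT
  let ord : T → Fin (r - 1) → (Fin n → Bool) :=
    fun p j => ((p.1.2.equivFinOfCardEq p.2.1).symm j : Fin n → Bool)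
  have ord_mem : ∀ (p : T) (j : Fin (r - 1)), ord p j ∈ p.1.2 := fun p j =>
    ((p.1.2.equivFinOfCardEq p.2.1).symm j).2
  have ord_inj : ∀ p : T, Injective (ord p) := by
    intro p a b hab
    have := Subtype.ext hab
    simpa using (p.1.2.equivFinOfCardEq p.2.1).symm.injective this
  have img : ∀ (p : T) (g : Fin (r - 1) → (Fin n → Bool)), Injective g →
      (∀ j, g j ∈ p.1.2) → Finset.image g Finset.univ = p.1.2 := by
    intro p g hg hmem
    apply Finset.eq_of_subset_of_card_le
    · intro x hx
      simp only [Finset.mem_image] at hx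
      obtain ⟨j, _, rfl⟩ := hx
      exact hmem j
    · rw [Finset.card_image_of_injective _ hg, Finset.card_univ,
        Fintype.card_fin, p.2.1]
  let Φ : T × Equiv.Perm (Fin (r - 1)) → (Fin n → Bool × Fin r) :=
    fun q i =>
      (q.1.1.1 i,
        if h : ∃ j, ord q.1 (q.2 j) i ≠ q.1.1.1 i then ⟨(h.choose : Fin (r-1)).1 + 1, by omega⟩
        else ⟨0, by omega⟩)
  have key : ∀ (q : T × Equiv.Perm (Fin (r - 1))) (i : Fin n) (j : Fin (r - 1)),
      ord q.1 (q.2 j) i ≠ q.1.1.1 i ↔ ((Φ q i).2 : ℕ) = j.1 + 1 := by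
    rintro ⟨p, σ⟩ i j
    constructor
    · intro hj
      have hex : ∃ j, ord p (σ j) i ≠ p.1.1 i := ⟨j, hj⟩
      have hch := hex.choose_spec
      have hvec : ord p (σ hex.choose) = ord p (σ j) :=
        p.2.2.2 i _ (ord_mem p _) _ (ord_mem p _) hch hj
      have heq : hex.choose = j := σ.injective (ord_inj p hvec)
      simp only [Φ, dif_pos hex, heq]
    · intro hid
      by_contra hne
      simp only [ne_eq, not_not] at hne
      by_cases hex : ∃ j, ord p (σ j) i ≠ p.1.1 i
      · have hch := hex.choose_spec
        simp only [Φ, dif_pos hex] at hid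
        have heq : hex.choose = j := Fin.ext (by omega)
        rw [heq] at hch
        exact hch hne
      · simp only [Φ, dif_neg hex] at hid
        omega
  have hΦ : Injective Φ := by
    rintro ⟨p, σ⟩ ⟨q, τ⟩ h
    have hx : p.1.1 = q.1.1 := by
      funext i
      exact congrArg Prod.fst (congrFun h i)
    have hord : ∀ j, ord p (σ j) = ord q (τ j) := by
      intro j
      funext i
      have h2 : ((Φ (⟨p, σ⟩) i).2 : ℕ) = ((Φ (⟨q, τ⟩) i).2 : ℕ) := by
        rw [congrFun h i]
      have k1 := key ⟨p, σ⟩ i j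
      have k2 := key ⟨q, τ⟩ i j
      rw [hx] at k1
      by_cases hc : ord p (σ j) i = q.1.1 i
      · by_cases hc2 : ord q (τ j) i = q.1.1 i
        · rw [hc, hc2]
        · exact absurd hc (k1.mpr (h2.trans (k2.mp hc2)))
      · have hc2 := k2.mpr (h2.symm.trans (k1.mp hc))
        revert hc hc2
        cases ord p (σ j) i <;> cases ord q (τ j) i <;> cases q.1.1 i <;> simp
    have hpq : p = q := by
      apply Subtype.ext
      apply Prod.ext hx
      rw [← img p (fun j => ord p (σ j)) ((ord_inj p).comp σ.injective)
            (fun j => ord_mem p (σ j)),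
          ← img q (fun j => ord q (τ j)) ((ord_inj q).comp τ.injective)
            (fun j => ord_mem q (τ j))]
      congr 1
      funext j
      exact hord j
    subst hpq
    have hστ : σ = τ := by
      apply Equiv.ext
      intro j
      exact ord_inj p (hord j)
    rw [hστ]
  have hcard := Nat.card_le_card_of_injective Φ hΦ
  rw [Nat.card_prod] at hcard
  have e1 : Nat.card (Equiv.Perm (Fin (r - 1))) = Nat.factorial (r - 1) := by
    rw [Nat.card_eq_fintype_card, Fintype.card_perm, Fintype.card_fin]
  have e2 : Nat.card (Fin n → Bool × Fin r) = (2 * r) ^ n := by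
    simp [Nat.card_eq_fintype_card]
  rw [e1, e2] at hcard
  exact hcard

/-- The number of focal families of size `r` in `{0,1}^n` — pairs of a focus vector `x₀`
and an unordered set `S` of `r - 1` further distinct vectors (all `r` vectors distinct)
such that for every coordinate `i` at most one member of `S` differs from `x₀` at `i`
(i.e. at least `r-2` of the `r-1` entries equal `x₀ i`) — is at most `(2r)^n / (r-1)!`. -/
theorem count_focal_families (r n : ℕ) (hr : 3 ≤ r) (hn : 1 ≤ n) :
    (Nat.card {p : (Fin n → Bool) × Finset (Fin n → Bool) //
        p.2.card = r - 1 ∧ p.1 ∉ p.2 ∧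
        ∀ i : Fin n, ∀ y ∈ p.2, ∀ y' ∈ p.2,
          y i ≠ p.1 i → y' i ≠ p.1 i → y = y'} : ℝ)
      ≤ (2 * (r : ℝ)) ^ n / (Nat.factorial (r - 1) : ℝ) := by
  have h := focal_aux r n hr
  rw [le_div_iff₀ (by positivity)]
  calc _ = ((Nat.card {p : (Fin n → Bool) × Finset (Fin n → Bool) //
        p.2.card = r - 1 ∧ p.1 ∉ p.2 ∧
        ∀ i : Fin n, ∀ y ∈ p.2, ∀ y' ∈ p.2,
          y i ≠ p.1 i → y' i ≠ p.1 i → y = y'} * Nat.factorial (r - 1) : ℕ) : ℝ) := by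
          push_cast; ring
    _ ≤ (((2 * r) ^ n : ℕ) : ℝ) := by exact_mod_cast h
    _ = (2 * (r : ℝ)) ^ n := by push_cast; ring
end

section
/- Let q ≥ 2, r ≥ 3 and n ≥ 1, and let F be a family of vectors in [q]^n with |F| > (r−1)·q^⌈(r−2)n/(r−1)⌉. Then F contains r distinct vectors forming a q-ary focal family of size r. -/
/-- If `F ⊆ [q]^n` has more than `(r-1)·q^⌈(r-2)n/(r-1)⌉` members, then `F` contains a
(`q`-ary) focal family of size `r`. -/
theorem q_ary_focal_family_upper_bound (q r n : ℕ) (hq : 2 ≤ q) (hr : 3 ≤ r) (hn : 1 ≤ n)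
    (F : Finset (Fin n → Fin q))
    (hF : (r - 1) * q ^ ⌈(((r : ℚ) - 2) * n) / ((r : ℚ) - 1)⌉₊ < F.card) :
    ContainsFocalFamily F r := by
  classical
  set m := r - 1 with hm
  have hm2 : 2 ≤ m := by omega
  have hm0 : 0 < m := by omega
  set k := ⌈(((r : ℚ) - 2) * n) / ((r : ℚ) - 1)⌉₊ with hk
  have hdiv : n / m < n := Nat.div_lt_self (by omega) (by omega)
  -- Step 1: `n - n / m ≤ k`
  have hkey : n - n / m ≤ k := by
    have hlt : n - n / m - 1 < k := by
      rw [hk, Nat.lt_ceil]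
      have hrm : (r : ℚ) = (m : ℚ) + 1 := by
        have h : r = m + 1 := by omega
        rw [h]; push_cast; ring
      have h1 : (n : ℚ) < (((n / m : ℕ) : ℚ) + 1) * (m : ℚ) := by
        have := Nat.div_add_mod n m
        have := Nat.mod_lt n hm0
        have h1' : n < (n / m + 1) * m := by nlinarith
        exact_mod_cast h1'
      have hle : n / m + 1 ≤ n := by omega
      have hcast : ((n - n / m - 1 : ℕ) : ℚ) = (n : ℚ) - ((n / m : ℕ) : ℚ) - 1 := by
        have h : n - n / m - 1 = n - (n / m + 1) := by omega
        rw [h, Nat.cast_sub hle]; push_cast; ring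
      have hmQ' : (0 : ℚ) < (m : ℚ) := by exact_mod_cast hm0
      have hmQ : (0 : ℚ) < (r : ℚ) - 1 := by rw [hrm]; linarith
      rw [hcast, lt_div_iff₀ hmQ, hrm]
      nlinarith [h1]
    omega
  -- The "outside of block j" sets and their cardinality bound
  have hOcard : ∀ j : Fin m,
      (Finset.univ.filter (fun i : Fin n => ¬ ((i : ℕ) % m = (j : ℕ)))).card ≤ k := by
    intro j
    have hsum := Finset.card_filter_add_card_filter_not
      (s := (Finset.univ : Finset (Fin n))) (p := fun i : Fin n => (i : ℕ) % m = (j : ℕ))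
    simp only [Finset.card_univ, Fintype.card_fin] at hsum
    have hB : n / m ≤ (Finset.univ.filter (fun i : Fin n => (i : ℕ) % m = (j : ℕ))).card := by
      have hlt : ∀ t : Fin (n / m), (j : ℕ) + (t : ℕ) * m < n := by
        intro t
        have h2 : (t : ℕ) + 1 ≤ n / m := t.isLt
        have h3 : ((t : ℕ) + 1) * m ≤ (n / m) * m := Nat.mul_le_mul_right m h2
        have h4 : (n / m) * m ≤ n := Nat.div_mul_le_self n m
        have h5 : (j : ℕ) < m := j.isLt
        nlinarith
      calc n / m = (Finset.univ : Finset (Fin (n / m))).card := by simp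
        _ ≤ _ := by
            apply Finset.card_le_card_of_injOn
              (fun t : Fin (n / m) => (⟨(j : ℕ) + (t : ℕ) * m, hlt t⟩ : Fin n))
            · intro t _
              simp [Nat.add_mul_mod_self_right, Nat.mod_eq_of_lt j.isLt]
            · intro t _ t' _ hEq
              have h1 : (j : ℕ) + (t : ℕ) * m = (j : ℕ) + (t' : ℕ) * m :=
                congrArg Fin.val hEq
              have h2 : (t : ℕ) * m = (t' : ℕ) * m := by omega
              exact Fin.ext (Nat.eq_of_mul_eq_mul_right hm0 h2)
    omega
  -- Step 2: cardinality of the "bad at j" sets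
  have hBad : ∀ j : Fin m,
      (F.filter (fun x => ∀ y ∈ F,
        (∀ i : Fin n, ¬ ((i : ℕ) % m = (j : ℕ)) → y i = x i) → y = x)).card ≤ q ^ k := by
    intro j
    set O := Finset.univ.filter (fun i : Fin n => ¬ ((i : ℕ) % m = (j : ℕ))) with hO
    have h1 : (F.filter (fun x => ∀ y ∈ F,
        (∀ i : Fin n, ¬ ((i : ℕ) % m = (j : ℕ)) → y i = x i) → y = x)).card
        ≤ (Finset.univ : Finset (↥O → Fin q)).card := by
      apply Finset.card_le_card_of_injOn (fun x (i : ↥O) => x i.1)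
      · intro x _; exact Finset.mem_univ _
      · intro x hx y hy hEq
        simp only [Finset.mem_coe, Finset.mem_filter] at hx hy
        refine (hx.2 y hy.1 fun i hi => ?_).symm
        exact (congrFun hEq ⟨i, by simp [hO, hi]⟩).symm
    have h2 : (Finset.univ : Finset (↥O → Fin q)).card = q ^ O.card := by
      simp [Finset.card_univ]
    have h3 : q ^ O.card ≤ q ^ k :=
      Nat.pow_le_pow_right (le_trans one_le_two hq) (hOcard j)
    exact (h1.trans_eq h2).trans h3
  -- Step 3: a "good" vector exists
  have hgood : ∃ x ∈ F, ∀ j : Fin m, ∃ y ∈ F, y ≠ x ∧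
      ∀ i : Fin n, ¬ ((i : ℕ) % m = (j : ℕ)) → y i = x i := by
    by_contra hcon
    push_neg at hcon
    have hsub : F ⊆ Finset.univ.biUnion (fun j : Fin m =>
        F.filter (fun x => ∀ y ∈ F,
          (∀ i : Fin n, ¬ ((i : ℕ) % m = (j : ℕ)) → y i = x i) → y = x)) := by
      intro x hx
      obtain ⟨j, hj⟩ := hcon x hx
      refine Finset.mem_biUnion.2 ⟨j, Finset.mem_univ _, Finset.mem_filter.2 ⟨hx, ?_⟩⟩
      intro y hy hagr
      by_contra hne
      obtain ⟨i, hi1, hi2⟩ := hj y hy hne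
      exact hi2 (hagr i hi1)
    have h1 := Finset.card_le_card hsub
    have h2 := Finset.card_biUnion_le (s := (Finset.univ : Finset (Fin m)))
      (t := fun j : Fin m => F.filter (fun x => ∀ y ∈ F,
        (∀ i : Fin n, ¬ ((i : ℕ) % m = (j : ℕ)) → y i = x i) → y = x))
    have h3 : ∑ j : Fin m, (F.filter (fun x => ∀ y ∈ F,
        (∀ i : Fin n, ¬ ((i : ℕ) % m = (j : ℕ)) → y i = x i) → y = x)).card ≤ m * q ^ k := by
      calc _ ≤ ∑ _j : Fin m, q ^ k := Finset.sum_le_sum fun j _ => hBad j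
        _ = m * q ^ k := by simp [Finset.sum_const, mul_comm]
    exact absurd ((h1.trans h2).trans h3) (Nat.not_le.2 hF)
  -- Step 4: construct the focal family
  obtain ⟨x, hxF, hx⟩ := hgood
  choose ys hysF hysne hysagr using hx
  refine ⟨x, hxF, ys, hysF, ?_, hysne, ?_⟩
  · -- injectivity
    intro j j' hEq
    by_contra hne
    apply hysne j
    funext i
    by_cases hij : (i : ℕ) % m = (j : ℕ)
    · have hne' : ¬ ((i : ℕ) % m = (j' : ℕ)) := by
        intro h
        exact hne (Fin.ext (by omega))
      calc ys j i = ys j' i := by rw [hEq]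
        _ = x i := hysagr j' i hne'
    · exact hysagr j i hij
  · -- focality
    intro i j j' hj hj'
    have h1 : (i : ℕ) % m = (j : ℕ) := by
      by_contra h; exact hj (hysagr j i h)
    have h2 : (i : ℕ) % m = (j' : ℕ) := by
      by_contra h; exact hj' (hysagr j' i h)
    exact Fin.ext (by omega)
end

section
/- For every q ≥ 2 and r ≥ 3 there exists a constant c > 0 such that for every n ≥ 1 there exists a family F of vectors in [q]^n containing no q-ary focal family of size r with |F| ≥ c·(q/((q−1)(r−1)+1)^{1/(r−1)})^n. -/
open Finset Matrix

theorem Matrix.card_mulVec_eq_zero_mul_pow_rank {K m ι : Type*} [Field K] [Fintype K]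
    [DecidableEq K] [Fintype m] [Fintype ι] [DecidableEq ι] (A : Matrix m ι K) :
    #{a | A *ᵥ a = 0} * Fintype.card K ^ A.rank = Fintype.card K ^ Fintype.card ι := by
  classical
  have hker : #{a | A *ᵥ a = 0} = Fintype.card (LinearMap.ker A.mulVecLin) := by
    rw [← Fintype.card_subtype]
    exact Fintype.card_congr (Equiv.subtypeEquivRight fun a => by simp)
  rw [hker, Module.card_eq_pow_finrank (K := K), Matrix.rank, ← pow_add, add_comm,
    LinearMap.finrank_range_add_finrank_ker, Module.finrank_fintype_fun_eq_card]

theorem linearIndependent_of_ne_zero_of_support_disjoint {R ι m : Type*} [Ring R]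
    [NoZeroDivisors R] (v : m → ι → R) (hv : ∀ j, v j ≠ 0)
    (hdisj : ∀ i j j', v j i ≠ 0 → v j' i ≠ 0 → j = j') : LinearIndependent R v := by
  classical
  rw [linearIndependent_iff']
  intro s g hsum j hj
  obtain ⟨i, hi⟩ := Function.ne_iff.mp (hv j)
  have hsum_i : ∑ k ∈ s, g k * v k i = g j * v j i := by
    refine sum_eq_single j (fun k _ hkj => ?_) (fun h => absurd hj h)
    by_cases hk : v k i = 0
    · rw [hk, mul_zero]
    · exact absurd (hdisj i k j hk hi) hkj
  have hsum_at_i := congrFun hsum i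
  simp only [Finset.sum_apply, Pi.smul_apply, smul_eq_mul, Pi.zero_apply] at hsum_at_i
  rw [hsum_i] at hsum_at_i
  exact (mul_eq_zero.mp hsum_at_i).resolve_right hi

instance {α : Type*} [DecidableEq α] {n m : ℕ} (x₀ : Fin n → α) (xs : Fin m → Fin n → α) :
    Decidable (IsFocalWithFocus x₀ xs) := by
  unfold IsFocalWithFocus; infer_instance

def FocalFree {α : Type*} {n : ℕ} (F : Finset (Fin n → α)) (m : ℕ) : Prop :=
  ∀ x₀ ∈ F, ∀ xs : Fin m → Fin n → α, (∀ j, xs j ∈ F) → (∀ j, xs j ≠ x₀) →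
    ¬ IsFocalWithFocus x₀ xs

theorem card_focalColumns_le (α : Type*) [Fintype α] [DecidableEq α] (m : ℕ) :
    #{p : α × (Fin m → α) | ∀ j j', p.2 j ≠ p.1 → p.2 j' ≠ p.1 → j = j'} ≤
      Fintype.card α * ((Fintype.card α - 1) * m + 1) := by
  -- a column is its focus value `v`, plus possibly one petal `j` taking a value `u ≠ v`
  let column : (Σ v : α, Option (Fin m × {u // u ≠ v})) → α × (Fin m → α)
    | ⟨v, none⟩ => (v, fun _ => v)
    | ⟨v, some (j, u)⟩ => (v, Function.update (fun _ => v) j u)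
  calc _ ≤ #(univ.image column) := card_le_card fun p hp => by
          simp only [mem_filter, mem_univ, true_and] at hp
          simp only [mem_image, mem_univ, true_and]
          by_cases h : ∃ j, p.2 j ≠ p.1
          · obtain ⟨j, hj⟩ := h
            refine ⟨⟨p.1, some (j, ⟨p.2 j, hj⟩)⟩, Prod.ext rfl (funext fun k => ?_)⟩
            by_cases hkj : k = j
            · subst hkj; simp [column]
            · simp only [column, Function.update_of_ne hkj]
              by_contra hk
              exact hkj (hp k j (Ne.symm hk) hj)
          · push Not at h
            exact ⟨⟨p.1, none⟩, Prod.ext rfl (funext fun k => (h k).symm)⟩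
    _ ≤ Fintype.card (Σ v : α, Option (Fin m × {u // u ≠ v})) := card_image_le
    _ = Fintype.card α * ((Fintype.card α - 1) * m + 1) := by
          simp [Fintype.card_sigma, Fintype.card_subtype_compl, mul_comm]

theorem card_isFocalWithFocus_le (α : Type*) [Fintype α] [DecidableEq α] (n m : ℕ) :
    #{c : (Fin n → α) × (Fin m → Fin n → α) | IsFocalWithFocus c.1 c.2} ≤
      (Fintype.card α * ((Fintype.card α - 1) * m + 1)) ^ n := by
  let columns : (Fin n → α) × (Fin m → Fin n → α) → Fin n → α × (Fin m → α) :=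
    fun c i => (c.1 i, fun j => c.2 j i)
  calc _ ≤ #(Fintype.piFinset fun _ : Fin n =>
        ({p : α × (Fin m → α) | ∀ j j', p.2 j ≠ p.1 → p.2 j' ≠ p.1 → j = j'} : Finset _)) := by
        refine card_le_card_of_injOn columns (fun c hc => ?_) (fun c _ c' _ h => ?_)
        · simp only [coe_filter, mem_univ, true_and, Set.mem_ofPred_eq] at hc
          simpa [columns, Fintype.mem_piFinset] using fun i => hc i
        · exact Prod.ext (funext fun i => congrArg Prod.fst (congrFun h i))
            (funext fun j => funext fun i => congrFun (congrArg Prod.snd (congrFun h i)) j)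
    _ ≤ _ := by
        rw [Fintype.card_piFinset, prod_const, card_univ, Fintype.card_fin]
        exact Nat.pow_le_pow_left (card_focalColumns_le α m) n

theorem card_dotProduct_collisions_mul_pow {K α : Type*} [Field K] [Fintype K] [DecidableEq K]
    {e : α → K} (he : Function.Injective e) {n m : ℕ} {x₀ : Fin n → α}
    {xs : Fin m → Fin n → α} (hne : ∀ j, xs j ≠ x₀) (hfoc : IsFocalWithFocus x₀ xs) :
    #{a : Fin n → K | ∀ j, a ⬝ᵥ (e ∘ xs j) = a ⬝ᵥ (e ∘ x₀)} * Fintype.card K ^ m =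
      Fintype.card K ^ n := by
  let A : Matrix (Fin m) (Fin n) K := of fun j i => e (xs j i) - e (x₀ i)
  have hA : ∀ j i, A j i ≠ 0 ↔ xs j i ≠ x₀ i := fun j i => sub_ne_zero.trans he.ne_iff
  have hrank : A.rank = m := by
    simpa using (linearIndependent_of_ne_zero_of_support_disjoint A
      (fun j h => hne j (funext fun i => not_not.mp ((hA j i).not.mp (by simp [h]))))
      (fun i j j' h h' => hfoc i j j' ((hA j i).mp h) ((hA j' i).mp h'))).rank_matrix
  have hker : #{a : Fin n → K | ∀ j, a ⬝ᵥ (e ∘ xs j) = a ⬝ᵥ (e ∘ x₀)} = #{a | A *ᵥ a = 0} := by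
    congr 1
    ext a
    simp only [mem_filter, mem_univ, true_and, funext_iff, mulVec, Pi.zero_apply]
    refine forall_congr' fun j => ?_
    rw [← sub_eq_zero, ← dotProduct_sub, dotProduct_comm]
    rfl
  simpa [hker, hrank] using A.card_mulVec_eq_zero_mul_pow_rank

def nondegenerateFocalPairs (α : Type*) [Fintype α] [DecidableEq α] (n m : ℕ) :
    Finset ((Fin n → α) × (Fin m → Fin n → α)) :=
  {c | (∀ j, c.2 j ≠ c.1) ∧ IsFocalWithFocus c.1 c.2}

def focalCollisions {K α : Type*} [Field K] [DecidableEq K] [Fintype α] [DecidableEq α]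
    (e : α → K) (m : ℕ) {n : ℕ} (a : Fin n → K) : Finset ((Fin n → α) × (Fin m → Fin n → α)) :=
  {c ∈ nondegenerateFocalPairs α n m | ∀ j, a ⬝ᵥ (e ∘ c.2 j) = a ⬝ᵥ (e ∘ c.1)}

section Hashing

variable {K α : Type*} [Field K] [Fintype K] [DecidableEq K] [Fintype α] [DecidableEq α]

theorem sum_card_focalCollisions_mul_pow {e : α → K} (he : Function.Injective e) (n m : ℕ) :
    (∑ a : Fin n → K, #(focalCollisions e m a)) * Fintype.card K ^ m =
      #(nondegenerateFocalPairs α n m) * Fintype.card K ^ n := by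
  have hdouble : ∑ a : Fin n → K, #(focalCollisions e m a) = ∑ c ∈ nondegenerateFocalPairs α n m,
      #{a : Fin n → K | ∀ j, a ⬝ᵥ (e ∘ c.2 j) = a ⬝ᵥ (e ∘ c.1)} :=
    sum_card_bipartiteAbove_eq_sum_card_bipartiteBelow _
  rw [hdouble, sum_mul, ← smul_eq_mul, ← sum_const]
  refine sum_congr rfl fun c hc => ?_
  simp only [nondegenerateFocalPairs, mem_filter, mem_univ, true_and] at hc
  exact card_dotProduct_collisions_mul_pow he hc.1 hc.2

theorem exists_two_mul_card_focalCollisions_le {e : α → K} (he : Function.Injective e)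
    {n m : ℕ} (h : 2 * ((Fintype.card α - 1) * m + 1) ^ n ≤ Fintype.card K ^ m) :
    ∃ a : Fin n → K, 2 * #(focalCollisions e m a) ≤ Fintype.card α ^ n := by
  set N := Fintype.card K
  set D := (Fintype.card α - 1) * m + 1
  have hcount : #(nondegenerateFocalPairs α n m) ≤ (Fintype.card α * D) ^ n :=
    (card_le_card (monotone_filter_right univ fun _ _ => And.right)).trans
      (card_isFocalWithFocus_le α n m)
  have hsum : ∑ a : Fin n → K, 2 * #(focalCollisions e m a) ≤
      ∑ _a : Fin n → K, Fintype.card α ^ n := by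
    refine Nat.le_of_mul_le_mul_right ?_ (pow_pos (Fintype.card_pos (α := K)) m)
    calc (∑ a : Fin n → K, 2 * #(focalCollisions e m a)) * N ^ m
        = 2 * (#(nondegenerateFocalPairs α n m) * N ^ n) := by
          rw [← mul_sum, mul_assoc, sum_card_focalCollisions_mul_pow he]
      _ ≤ 2 * ((Fintype.card α * D) ^ n * N ^ n) := by gcongr
      _ = Fintype.card α ^ n * N ^ n * (2 * D ^ n) := by rw [mul_pow]; ring
      _ ≤ Fintype.card α ^ n * N ^ n * N ^ m := by gcongr
      _ = (∑ _a : Fin n → K, Fintype.card α ^ n) * N ^ m := by simp [N, mul_comm]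
  obtain ⟨a, -, ha⟩ := exists_le_of_sum_le univ_nonempty hsum
  exact ⟨a, ha⟩

theorem exists_focalFree_of_two_mul_card_focalCollisions_le (e : α → K) {n m : ℕ}
    {a : Fin n → K} (ha : 2 * #(focalCollisions e m a) ≤ Fintype.card α ^ n) :
    ∃ F : Finset (Fin n → α), FocalFree F m ∧
      (Fintype.card α ^ n : ℝ) / (2 * Fintype.card K) ≤ #F := by
  set G := univ \ (focalCollisions e m a).image Prod.fst
  have hG : (Fintype.card α ^ n : ℝ) / 2 ≤ #G := by
    have h₁ : #((focalCollisions e m a).image Prod.fst) ≤ #(focalCollisions e m a) :=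
      card_image_le
    have h₂ : Fintype.card α ^ n - #((focalCollisions e m a).image Prod.fst) ≤ #G := by
      simpa using le_card_sdiff ((focalCollisions e m a).image Prod.fst) univ
    rw [div_le_iff₀ two_pos]
    exact_mod_cast (by omega : Fintype.card α ^ n ≤ #G * 2)
  obtain ⟨t, -, ht⟩ := exists_le_card_fiber_of_nsmul_le_card_of_maps_to
    (f := fun x => a ⬝ᵥ (e ∘ x)) (fun _ _ => mem_univ _) univ_nonempty
    (b := (Fintype.card α ^ n : ℝ) / (2 * Fintype.card K)) (by
      rw [card_univ, nsmul_eq_mul]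
      calc _ = (Fintype.card α ^ n : ℝ) / 2 := by field_simp
        _ ≤ #G := hG)
  refine ⟨{x ∈ G | a ⬝ᵥ (e ∘ x) = t}, fun x₀ hx₀ xs hxs hne hfoc => ?_, ht⟩
  simp only [G, mem_filter, mem_sdiff, mem_univ, true_and, mem_image] at hx₀ hxs
  refine hx₀.1 ⟨(x₀, xs), ?_, rfl⟩
  simp only [focalCollisions, nondegenerateFocalPairs, mem_filter, mem_univ, true_and]
  exact ⟨⟨hne, hfoc⟩, fun j => (hxs j).2.trans hx₀.2.symm⟩

theorem exists_focalFree_of_two_mul_pow_le_card_pow {e : α → K} (he : Function.Injective e)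
    {n m : ℕ} (h : 2 * ((Fintype.card α - 1) * m + 1) ^ n ≤ Fintype.card K ^ m) :
    ∃ F : Finset (Fin n → α), FocalFree F m ∧
      (Fintype.card α ^ n : ℝ) / (2 * Fintype.card K) ≤ #F :=
  have ⟨_, ha⟩ := exists_two_mul_card_focalCollisions_le he h
  exists_focalFree_of_two_mul_card_focalCollisions_le e ha

end Hashing

theorem Nat.exists_prime_gt_and_two_mul_le_le_six_mul {q : ℕ} (hq : 1 ≤ q) {y : ℝ}
    (hy : 1 ≤ y) : ∃ N : ℕ, N.Prime ∧ q < N ∧ 2 * y ≤ N ∧ (N : ℝ) ≤ 6 * q * y := by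
  have hk : 2 * y ≤ ⌈2 * y⌉₊ := Nat.le_ceil _
  have hk' : (⌈2 * y⌉₊ : ℝ) < 2 * y + 1 := Nat.ceil_lt_add_one (by linarith)
  have hk1 : 1 ≤ ⌈2 * y⌉₊ := by exact_mod_cast (by linarith : (1 : ℝ) ≤ 2 * y).trans hk
  obtain ⟨N, hN, hlt, hle⟩ := Nat.exists_prime_lt_and_le_two_mul (q * ⌈2 * y⌉₊) (by positivity)
  have hlt' : (q : ℝ) * ⌈2 * y⌉₊ < N := by exact_mod_cast hlt
  have hle' : (N : ℝ) ≤ 2 * (q * ⌈2 * y⌉₊) := by exact_mod_cast hle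
  have hq' : (1 : ℝ) ≤ q := by exact_mod_cast hq
  refine ⟨N, hN, lt_of_le_of_lt (Nat.le_mul_of_pos_right q hk1) hlt, ?_, ?_⟩
  · nlinarith
  · nlinarith

theorem exists_prime_two_mul_pow_le_pow {q D s : ℕ} (hq : 1 ≤ q) (hD : 1 ≤ D) (hs : s ≠ 0)
    (n : ℕ) : ∃ N : ℕ, N.Prime ∧ q < N ∧ 2 * D ^ n ≤ N ^ s ∧
      (N : ℝ) ≤ 6 * q * ((D : ℝ) ^ (s : ℝ)⁻¹) ^ n := by
  set ρ := (D : ℝ) ^ (s : ℝ)⁻¹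
  have hρ : ρ ^ s = D := Real.rpow_inv_natCast_pow (Nat.cast_nonneg _) hs
  have hρ1 : 1 ≤ ρ := Real.one_le_rpow (mod_cast hD) (by positivity)
  obtain ⟨N, hN, hqN, hρN, hNρ⟩ :=
    Nat.exists_prime_gt_and_two_mul_le_le_six_mul hq (one_le_pow₀ hρ1 (n := n))
  refine ⟨N, hN, hqN, ?_, hNρ⟩
  have : (2 * D ^ n : ℝ) ≤ N ^ s := calc
    (2 * D ^ n : ℝ) ≤ 2 ^ s * (ρ ^ s) ^ n := by
      rw [hρ]; gcongr; exact le_self_pow₀ one_le_two hs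
    _ = (2 * ρ ^ n) ^ s := by ring
    _ ≤ N ^ s := by gcongr
  exact_mod_cast this

/-- For every `q ≥ 2` and `r ≥ 3` there is `c > 0` such that for every `n ≥ 1` there is a
family of vectors in `[q]^n` with no `q`-ary focal family of size `r` of cardinality at
least `c·(q/((q-1)(r-1)+1)^(1/(r-1)))^n`. -/
theorem q_ary_focal_family_lower_bound (q r : ℕ) (hq : 2 ≤ q) (hr : 3 ≤ r) :
    ∃ c : ℝ, 0 < c ∧ ∀ n : ℕ, 1 ≤ n →
      ∃ F : Finset (Fin n → Fin q),
        ¬ ContainsFocalFamily F r ∧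
        c * ((q : ℝ) / (((q : ℝ) - 1) * ((r : ℝ) - 1) + 1) ^ ((1 : ℝ) / ((r : ℝ) - 1))) ^ n
          ≤ (F.card : ℝ) := by
  have hr₁ : (r : ℝ) - 1 = (r - 1 : ℕ) := by push_cast [Nat.cast_sub (by omega : 1 ≤ r)]; ring
  have hD : ((q : ℝ) - 1) * ((r : ℝ) - 1) + 1 = ((q - 1) * (r - 1) + 1 : ℕ) := by
    push_cast [Nat.cast_sub (by omega : 1 ≤ q), hr₁]; ring
  rw [hD, hr₁, one_div]
  refine ⟨1 / (12 * q), by positivity, fun n _ => ?_⟩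
  obtain ⟨N, hN, hqN, hDN, hNρ⟩ := exists_prime_two_mul_pow_le_pow (q := q) (s := r - 1)
    (by omega) (Nat.le_add_left 1 _) (by omega) n
  have : Fact N.Prime := ⟨hN⟩
  have hinj : Function.Injective fun v : Fin q => ((v : ℕ) : ZMod N) := fun v w h =>
    Fin.ext <| by
      simpa [ZMod.val_cast_of_lt (v.2.trans hqN), ZMod.val_cast_of_lt (w.2.trans hqN)] using
        congrArg ZMod.val h
  obtain ⟨F, hfree, hcard⟩ := exists_focalFree_of_two_mul_pow_le_card_pow hinj (by simpa using hDN)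
  refine ⟨F, fun ⟨x₀, hx₀, xs, hxs, _, hne, hfoc⟩ => hfree x₀ hx₀ xs hxs hne hfoc, ?_⟩
  rw [Fintype.card_fin, ZMod.card] at hcard
  refine le_trans ?_ hcard
  rw [div_pow, one_div_mul_eq_div, div_div, div_le_div_iff_of_pos_left (by positivity)
    (by positivity) (mul_pos two_pos (mod_cast hN.pos))]
  linarith
end

section
/- Let r ≥ 3, let q be a prime power with q ≥ n ≥ 1, and identify the alphabet with the finite field 𝔽_q. Then there exists a family F of vectors in 𝔽_q^n with |F| = q^⌈(r−2)n/(r−1)⌉ containing no q-ary focal family of size r. -/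
open Polynomial Finset
/-- If `q` is a prime power with `q ≥ n ≥ 1` and `K` is the field with `q` elements, then
there is a family of `q^⌈(r-2)n/(r-1)⌉` vectors in `K^n` containing no `q`-ary focal
family of size `r`. -/
theorem reed_solomon_no_focal_family (q r n : ℕ) (hr : 3 ≤ r) (hn : 1 ≤ n)
    (hq : IsPrimePow q) (hnq : n ≤ q)
    (K : Type) [Field K] [Fintype K] (hK : Fintype.card K = q) :
    ∃ F : Finset (Fin n → K),
      F.card = q ^ ⌈(((r : ℚ) - 2) * n) / ((r : ℚ) - 1)⌉₊ ∧
      ¬ ContainsFocalFamily F r := by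
  classical
  set k : ℕ := ⌈(((r : ℚ) - 2) * n) / ((r : ℚ) - 1)⌉₊ with hkdef
  have hr1 : (0 : ℚ) < (r : ℚ) - 1 := by
    have : (3 : ℚ) ≤ (r : ℚ) := by exact_mod_cast hr
    linarith
  have hx0 : (0 : ℚ) ≤ (((r : ℚ) - 2) * n) / ((r : ℚ) - 1) := by
    apply div_nonneg _ hr1.le
    have h3 : (3 : ℚ) ≤ (r : ℚ) := by exact_mod_cast hr
    have hn0 : (0 : ℚ) ≤ (n : ℚ) := by positivity
    nlinarith
  -- k ≤ n
  have hkn : k ≤ n := by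
    rw [hkdef, Nat.ceil_le, div_le_iff₀ hr1]
    have h3 : (3 : ℚ) ≤ (r : ℚ) := by exact_mod_cast hr
    have hn0 : (0 : ℚ) ≤ (n : ℚ) := by positivity
    nlinarith
  -- key arithmetic inequality
  have harith : n < (r - 1) * (n - k + 1) := by
    have hceil : (k : ℚ) < (((r : ℚ) - 2) * n) / ((r : ℚ) - 1) + 1 :=
      Nat.ceil_lt_add_one hx0
    have hmul : ((r : ℚ) - 1) * k < ((r : ℚ) - 2) * n + ((r : ℚ) - 1) := by
      rw [div_add' _ _ _ hr1.ne'] at hceil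
      calc ((r : ℚ) - 1) * k = (k : ℚ) * ((r : ℚ) - 1) := by ring
      _ < ((r : ℚ) - 2) * n + ((r : ℚ) - 1) := by
        rw [lt_div_iff₀ hr1] at hceil; linarith
    have hgoal : (n : ℚ) < ((r : ℚ) - 1) * ((n : ℚ) - k + 1) := by nlinarith
    have hr1' : 1 ≤ r := by omega
    have : (n : ℚ) < (((r - 1 : ℕ) : ℚ)) * (((n - k + 1 : ℕ) : ℚ)) := by
      push_cast [Nat.cast_sub hr1', Nat.cast_sub hkn]
      convert hgoal using 2 <;> push_cast <;> ring
    exact_mod_cast this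
  clear_value k
  -- injective evaluation points
  obtain ⟨e⟩ : Nonempty (Fin n ↪ K) := by
    apply Function.Embedding.nonempty_of_card_le
    simp [hK, hnq]
  -- the Reed-Solomon map
  let ψ : (Fin k → K) → K[X] := fun c => ((degreeLTEquiv K k).symm c : K[X])
  have hψmem : ∀ c, ψ c ∈ degreeLT K k := fun c => ((degreeLTEquiv K k).symm c).2
  have hψinj : Function.Injective ψ := by
    intro c c' h
    have : (degreeLTEquiv K k).symm c = (degreeLTEquiv K k).symm c' := Subtype.ext h
    exact (degreeLTEquiv K k).symm.injective this
  let φ : (Fin k → K) → (Fin n → K) := fun c i => (ψ c).eval (e i)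
  -- root counting: a nonzero poly of degree < k vanishes at < k of the points e i
  have hroots : ∀ p : K[X], p ≠ 0 → p ∈ degreeLT K k →
      (univ.filter fun i : Fin n => p.eval (e i) = 0).card < k := by
    intro p hp hdeg
    have hnd : p.natDegree < k := by
      rw [mem_degreeLT] at hdeg
      exact (natDegree_lt_iff_degree_lt hp).mpr hdeg
    set S := univ.filter fun i : Fin n => p.eval (e i) = 0 with hS
    have hsub : S.image e ⊆ p.roots.toFinset := by
      intro x hx
      obtain ⟨i, hi, rfl⟩ := Finset.mem_image.mp hx
      rw [Multiset.mem_toFinset, mem_roots hp]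
      exact (mem_filter.mp hi).2
    calc S.card = (S.image e).card := (Finset.card_image_of_injective _ e.injective).symm
      _ ≤ p.roots.toFinset.card := Finset.card_le_card hsub
      _ ≤ Multiset.card p.roots := Multiset.toFinset_card_le _
      _ ≤ p.natDegree := card_roots' p
      _ < k := hnd
  -- injectivity of φ
  have hφinj : Function.Injective φ := by
    intro c c' h
    apply hψinj
    have hzero : ∀ i : Fin n, (ψ c - ψ c').eval (e i) = 0 := by
      intro i
      have := congrFun h i
      simp only [φ] at this
      simp [this]
    by_contra hne
    have hd : ψ c - ψ c' ∈ degreeLT K k := sub_mem (hψmem c) (hψmem c')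
    have hne' : ψ c - ψ c' ≠ 0 := sub_ne_zero.mpr hne
    have := hroots _ hne' hd
    have hfull : (univ.filter fun i : Fin n => (ψ c - ψ c').eval (e i) = 0) = univ := by
      apply Finset.eq_univ_of_forall
      intro i; exact mem_filter.mpr ⟨mem_univ i, hzero i⟩
    rw [hfull, Finset.card_univ, Fintype.card_fin] at this
    omega
  refine ⟨Finset.image φ univ, ?_, ?_⟩
  · rw [Finset.card_image_of_injective _ hφinj, Finset.card_univ,
      Fintype.card_fun, hK, Fintype.card_fin]
  · rintro ⟨x₀, hx₀, xs, hxsF, hinj, hne, hfocal⟩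
    obtain ⟨c₀, -, rfl⟩ := Finset.mem_image.mp hx₀
    choose cs hcs hcseq using fun j => Finset.mem_image.mp (hxsF j)
    -- each difference set is large
    set D : Fin (r - 1) → Finset (Fin n) :=
      fun j => univ.filter fun i => xs j i ≠ φ c₀ i with hD
    have hDcard : ∀ j, n - k + 1 ≤ (D j).card := by
      intro j
      simp only [hD]
      have hpne : ψ (cs j) - ψ c₀ ≠ 0 := by
        intro h0
        exact hne j (by rw [← hcseq j]; exact congrArg φ (hψinj (sub_eq_zero.mp h0)))
      have hd : ψ (cs j) - ψ c₀ ∈ degreeLT K k := sub_mem (hψmem _) (hψmem _)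
      have hlt := hroots _ hpne hd
      have heqfilter : (univ.filter fun i : Fin n => (ψ (cs j) - ψ c₀).eval (e i) = 0)
          = univ.filter fun i => ¬ (xs j i ≠ φ c₀ i) := by
        ext i
        simp only [Finset.mem_filter, Finset.mem_univ, true_and, not_not, ← hcseq j]
        simp only [φ]
        rw [Polynomial.eval_sub, sub_eq_zero]
      rw [heqfilter] at hlt
      have hsplit := Finset.card_filter_add_card_filter_not
        (s := (univ : Finset (Fin n))) (p := fun i => xs j i ≠ φ c₀ i)
      rw [Finset.card_univ, Fintype.card_fin] at hsplit
      omega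
    have hdisj : ∀ j ∈ (univ : Finset (Fin (r-1))), ∀ j' ∈ univ, j ≠ j' →
        Disjoint (D j) (D j') := by
      intro j _ j' _ hjj'
      rw [Finset.disjoint_left]
      intro i hi hi'
      exact hjj' (hfocal i j j' (mem_filter.mp hi).2 (mem_filter.mp hi').2)
    have hsum : ∑ j, (D j).card ≤ n := by
      rw [← Finset.card_biUnion hdisj]
      calc (univ.biUnion D).card ≤ (univ : Finset (Fin n)).card :=
            Finset.card_le_card (Finset.subset_univ _)
        _ = n := by simp
    have : (r - 1) * (n - k + 1) ≤ n := by
      calc (r - 1) * (n - k + 1) = ∑ _j : Fin (r-1), (n - k + 1) := by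
            simp [mul_comm]
        _ ≤ ∑ j, (D j).card := Finset.sum_le_sum fun j _ => hDcard j
        _ ≤ n := hsum
    omega
end

section
/- Let r ≥ 3, 0 ≤ k ≤ n, and let F be a family of k-element subsets of [n] = {1,…,n} containing no 1-focal family of size r. Then |F| ≤ (r−1)·C(n, ⌈(r−2)k/(r−1)⌉) / C(k, ⌈(r−2)k/(r−1)⌉), where C(·,·) denotes the binomial coefficient. -/
/-- A family consisting of a focus set `A₀` and `m` further sets `As 0, …, As (m-1)`
(viewed as subsets of `[n]`, i.e. characteristic vectors in `{0,1}^n`) is *1-focal with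
focus `A₀`* if for every `i ∈ A₀`, at most one of the sets `As j` misses `i`
(equivalently, at least `m - 1` of the `m` characteristic-vector entries equal `1`). -/
def IsOneFocalWithFocus {n m : ℕ} (A₀ : Finset (Fin n)) (As : Fin m → Finset (Fin n)) : Prop :=
  ∀ i ∈ A₀, ∀ j j' : Fin m, i ∉ As j → i ∉ As j' → j = j'

/-- A family `F` of subsets of `[n]` contains a 1-focal family of size `r` if some `r`
distinct members `A₀, As 0, …, As (r-2)` of `F` are 1-focal with focus `A₀`. -/
def ContainsOneFocalFamily {n : ℕ} (F : Finset (Finset (Fin n))) (r : ℕ) : Prop :=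
  ∃ A₀ ∈ F, ∃ As : Fin (r - 1) → Finset (Fin n),
    (∀ j, As j ∈ F) ∧ Function.Injective As ∧ (∀ j, As j ≠ A₀) ∧ IsOneFocalWithFocus A₀ As

/-!
Fix `A ∈ F`, put `u = ⌊k/(r-1)⌋`, so that `k - u = ⌈(r-2)k/(r-1)⌉`, and call a `(k-u)`-subset of
`A` private if no other member of `F` contains it. Private sets of distinct members are distinct,
so the numbers of private sets sum to at most `C(n, k-u)`. If `B₁, …, B_{r-1} ∈ F ∖ {A}` have
pairwise disjoint differences `A ∖ Bᵢ`, they form a 1-focal family with focus `A`; hence the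
complements in `A` of the non-private sets form a family of `u`-subsets of `A` without `r-1`
pairwise disjoint members. Averaging over ordered `(r-1)`-tuples of pairwise disjoint `u`-subsets
of `A`, such a family has at most `(r-2)/(r-1) · C(k,u)` members, so `A` has at least
`C(k,u)/(r-1)` private sets.
-/

open Finset Function

theorem Fin.pairwise_disjoint_insertNth {α : Type*} [PartialOrder α] [OrderBot α] {j : ℕ}
    (p : Fin (j + 1)) (a : α) (f : Fin j → α) :
    Pairwise (Disjoint on Fin.insertNth p a f) ↔
      (∀ i, Disjoint (f i) a) ∧ Pairwise (Disjoint on f) := by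
  simp [Pairwise, Fin.forall_iff_succAbove p, onFun, Fin.succAbove_ne,
    (Fin.succAbove_ne p _).symm, disjoint_comm (a := a), forall_and]

section DisjointTuples

variable {α : Type*}

open scoped Classical in
noncomputable def disjointTuples (u : ℕ) (G : Finset α) (j : ℕ) : Finset (Fin j → Finset α) :=
  {V ∈ Fintype.piFinset fun _ => G.powersetCard u | Pairwise (Disjoint on V)}

variable {u j : ℕ} {G U : Finset α}

theorem mem_disjointTuples {V : Fin j → Finset α} :
    V ∈ disjointTuples u G j ↔ (∀ i, V i ∈ G.powersetCard u) ∧ Pairwise (Disjoint on V) := by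
  simp [disjointTuples]

variable [DecidableEq α]

theorem insertNth_mem_disjointTuples_iff (p : Fin (j + 1)) (W : Fin j → Finset α) :
    Fin.insertNth p U W ∈ disjointTuples u G (j + 1) ↔
      U ∈ G.powersetCard u ∧ W ∈ disjointTuples u (G \ U) j := by
  simp only [mem_disjointTuples, Fin.forall_iff_succAbove p, Fin.insertNth_apply_same,
    Fin.insertNth_apply_succAbove, Fin.pairwise_disjoint_insertNth, mem_powersetCard, subset_sdiff,
    forall_and]
  tauto

theorem card_filter_disjointTuples_apply_eq (p : Fin (j + 1)) (hU : U ∈ G.powersetCard u) :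
    #{V ∈ disjointTuples u G (j + 1) | V p = U} = #(disjointTuples u (G \ U) j) := by
  refine card_nbij' p.removeNth (fun W : Fin j → Finset α => p.insertNth U W)
    (fun V hV => ?_) (fun W hW => ?_) (fun V hV => ?_) (fun W _ => ?_) <;>
    simp only [coe_filter, mem_coe, Set.mem_ofPred_eq] at *
  · obtain ⟨hV, rfl⟩ := hV
    rw [← Fin.insertNth_self_removeNth p V, insertNth_mem_disjointTuples_iff] at hV
    exact hV.2
  · simp [insertNth_mem_disjointTuples_iff, hU, hW]
  · rw [← hV.2, Fin.insertNth_self_removeNth]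
  · exact Fin.removeNth_insertNth (α := fun _ => Finset α) p U W

theorem card_filter_disjointTuples_apply_mem {H : Finset (Finset α)}
    (hH : H ⊆ G.powersetCard u) (p : Fin (j + 1)) :
    #{V ∈ disjointTuples u G (j + 1) | V p ∈ H} = ∑ U ∈ H, #(disjointTuples u (G \ U) j) := by
  rw [card_eq_sum_card_fiberwise (s := {V ∈ disjointTuples u G (j + 1) | V p ∈ H})
    (f := fun V => V p) (t := H) fun V hV => (mem_filter.1 hV).2]
  refine sum_congr rfl fun U hU => ?_
  rw [filter_filter, ← card_filter_disjointTuples_apply_eq p (hH hU)]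
  congr 1
  exact filter_congr fun V _ => ⟨And.right, fun h => ⟨h ▸ hU, h⟩⟩

def numDisjointTuples (u : ℕ) : ℕ → ℕ → ℕ
  | _, 0 => 1
  | m, j + 1 => m.choose u * numDisjointTuples u (m - u) j

theorem numDisjointTuples_pos : ∀ {m j : ℕ}, j * u ≤ m → 0 < numDisjointTuples u m j
  | _, 0, _ => Nat.one_pos
  | m, j + 1, h => by
    rw [Nat.succ_mul] at h
    exact Nat.mul_pos (Nat.choose_pos (by omega)) (numDisjointTuples_pos (by omega))

theorem card_disjointTuples : ∀ (G : Finset α) (j : ℕ),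
    #(disjointTuples u G j) = numDisjointTuples u #G j
  | G, 0 => by
    simp [disjointTuples, numDisjointTuples, Subsingleton.pairwise]
  | G, j + 1 => by
    rw [← filter_true_of_mem (p := fun V => V 0 ∈ G.powersetCard u)
      fun V hV => (mem_disjointTuples.1 hV).1 0,
      card_filter_disjointTuples_apply_mem subset_rfl,
      sum_congr rfl fun U hU => by
        rw [card_disjointTuples, card_sdiff_of_subset (mem_powersetCard.1 hU).1,
          (mem_powersetCard.1 hU).2],
      sum_const, card_powersetCard, smul_eq_mul, numDisjointTuples]

theorem card_mul_le_of_forall_not_pairwise_disjoint {s : ℕ} {H : Finset (Finset α)}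
    (hH : H ⊆ G.powersetCard u) (hsu : s * u ≤ #G)
    (hno : ∀ V : Fin s → Finset α, (∀ i, V i ∈ H) → ¬ Pairwise (Disjoint on V)) :
    s * #H ≤ (s - 1) * (#G).choose u := by
  obtain _ | j := s
  · simp
  set N := numDisjointTuples u (#G - u) j
  have hN : 0 < N := numDisjointTuples_pos (by rw [Nat.succ_mul] at hsu; omega)
  have hhits (p : Fin (j + 1)) : #{V ∈ disjointTuples u G (j + 1) | V p ∈ H} = #H * N := by
    rw [card_filter_disjointTuples_apply_mem hH, ← smul_eq_mul, ← sum_const]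
    refine sum_congr rfl fun U hU => ?_
    rw [card_disjointTuples, card_sdiff_of_subset (mem_powersetCard.1 (hH hU)).1,
      (mem_powersetCard.1 (hH hU)).2]
  have hmiss (V) (hV : V ∈ disjointTuples u G (j + 1)) : #{p | V p ∈ H} ≤ j := by
    obtain ⟨p, hp⟩ : ∃ p, V p ∉ H := by
      by_contra! h
      exact hno V h (mem_disjointTuples.1 hV).2
    have := card_lt_card ((filter_ssubset (p := fun q => V q ∈ H)).2 ⟨p, mem_univ p, hp⟩)
    simp_all
  -- double counting the pairs `(p, V)` with `V p ∈ H`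
  have hcount := card_mul_le_card_mul (fun p V => V p ∈ H) (s := univ)
    (t := disjointTuples u G (j + 1)) (fun p _ => (hhits p).ge) hmiss
  rw [card_disjointTuples, numDisjointTuples, card_univ, Fintype.card_fin] at hcount
  refine Nat.le_of_mul_le_mul_right ?_ hN
  calc (j + 1) * #H * N = (j + 1) * (#H * N) := by ring
    _ ≤ (#G).choose u * N * j := hcount
    _ = (j + 1 - 1) * (#G).choose u * N := by simp only [add_tsub_cancel_right]; ring

end DisjointTuples

section PrivateSubsets

variable {α : Type*} [DecidableEq α]

def privateSubsets (F : Finset (Finset α)) (t : ℕ) (A : Finset α) : Finset (Finset α) :=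
  {T ∈ A.powersetCard t | ∀ B ∈ F, T ⊆ B → B = A}

theorem mem_privateSubsets {F : Finset (Finset α)} {t : ℕ} {A T : Finset α} :
    T ∈ privateSubsets F t A ↔ T ∈ A.powersetCard t ∧ ∀ B ∈ F, T ⊆ B → B = A :=
  mem_filter

theorem disjoint_privateSubsets {F : Finset (Finset α)} {t : ℕ} {A B : Finset α} (hB : B ∈ F)
    (hAB : A ≠ B) : Disjoint (privateSubsets F t A) (privateSubsets F t B) := by
  refine disjoint_left.2 fun T hTA hTB => hAB ?_
  exact ((mem_privateSubsets.1 hTA).2 B hB (mem_powersetCard.1 (mem_privateSubsets.1 hTB).1).1).symm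

theorem sum_card_privateSubsets_le [Fintype α] (F : Finset (Finset α)) (t : ℕ) :
    ∑ A ∈ F, #(privateSubsets F t A) ≤ (Fintype.card α).choose t := by
  rw [← card_biUnion fun A _ B hB hAB => disjoint_privateSubsets hB hAB, ← card_univ,
    ← card_powersetCard]
  refine card_le_card (biUnion_subset.2 fun A _ T hT => ?_)
  exact mem_powersetCard.2 ⟨subset_univ T, (mem_powersetCard.1 (mem_privateSubsets.1 hT).1).2⟩

end PrivateSubsets

section OneFocal

variable {n : ℕ}

theorem isOneFocalWithFocus_iff_pairwise_disjoint_sdiff {m : ℕ} {A₀ : Finset (Fin n)}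
    {As : Fin m → Finset (Fin n)} :
    IsOneFocalWithFocus A₀ As ↔ Pairwise (Disjoint on fun j => A₀ \ As j) := by
  simp only [IsOneFocalWithFocus, Pairwise, onFun, disjoint_left, mem_sdiff]
  grind

theorem containsOneFocalFamily_of_pairwise_disjoint_sdiff {F : Finset (Finset (Fin n))}
    {r k : ℕ} (hunif : ∀ A ∈ F, #A = k) {A₀ : Finset (Fin n)} (hA₀ : A₀ ∈ F)
    (B : Fin (r - 1) → Finset (Fin n)) (hB : ∀ j, B j ∈ F) (hBA₀ : ∀ j, B j ≠ A₀)
    (hdisj : Pairwise (Disjoint on fun j => A₀ \ B j)) :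
    ContainsOneFocalFamily F r := by
  refine ⟨A₀, hA₀, B, hB, fun i i' hii' => ?_, hBA₀,
    isOneFocalWithFocus_iff_pairwise_disjoint_sdiff.2 hdisj⟩
  by_contra hne
  have hsub : A₀ ⊆ B i := by
    simpa [onFun, hii'] using hdisj hne
  exact hBA₀ i (eq_of_subset_of_card_le hsub (by rw [hunif _ (hB i), hunif _ hA₀])).symm

theorem choose_le_mul_card_privateSubsets {F : Finset (Finset (Fin n))} {r k u : ℕ}
    (hunif : ∀ A ∈ F, #A = k) (hF : ¬ ContainsOneFocalFamily F r) (hr : 2 ≤ r)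
    (hu : (r - 1) * u ≤ k) {A : Finset (Fin n)} (hA : A ∈ F) :
    k.choose u ≤ (r - 1) * #(privateSubsets F (k - u) A) := by
  have huk : u ≤ k := le_trans (Nat.le_mul_of_pos_left u (by omega)) hu
  set C := {T ∈ A.powersetCard (k - u) | ¬ ∀ B ∈ F, T ⊆ B → B = A}
  have hsplit : #(privateSubsets F (k - u) A) + #C = k.choose u := by
    rw [privateSubsets, card_filter_add_card_filter_not, card_powersetCard, hunif A hA,
      Nat.choose_symm (by omega)]
  have hC (T) (hT : T ∈ C) : T ⊆ A ∧ #T = k - u := mem_powersetCard.1 (mem_filter.1 hT).1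
  have hcompl : #(C.image (A \ ·)) = #C := card_image_of_injOn fun T hT T' hT' h => by
    rw [← Finset.sdiff_sdiff_eq_self (hC T hT).1, h, Finset.sdiff_sdiff_eq_self (hC T' hT').1]
  have hsub : C.image (A \ ·) ⊆ A.powersetCard u := by
    refine image_subset_iff.2 fun T hT => mem_powersetCard.2 ⟨sdiff_subset, ?_⟩
    rw [card_sdiff_of_subset (hC T hT).1, (hC T hT).2, hunif A hA]
    omega
  have hno (V : Fin (r - 1) → Finset (Fin n)) (hV : ∀ i, V i ∈ C.image (A \ ·)) :
      ¬ Pairwise (Disjoint on V) := by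
    intro hdisj
    choose T hT hTV using fun i => mem_image.1 (hV i)
    have hB (i) : ∃ B ∈ F, T i ⊆ B ∧ B ≠ A := by simpa using (mem_filter.1 (hT i)).2
    choose B hBF hTB hBA using hB
    refine hF (containsOneFocalFamily_of_pairwise_disjoint_sdiff hunif hA B hBF hBA ?_)
    refine fun i i' hii' => (hdisj hii').mono ?_ ?_ <;> rw [← hTV]
    exacts [sdiff_subset_sdiff subset_rfl (hTB i), sdiff_subset_sdiff subset_rfl (hTB i')]
  have hbound := card_mul_le_of_forall_not_pairwise_disjoint hsub (by rwa [hunif A hA]) hno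
  rw [hcompl, hunif A hA] at hbound
  obtain ⟨s, hs⟩ : ∃ s, r - 1 = s + 1 := ⟨r - 2, by omega⟩
  rw [hs] at hbound ⊢
  rw [add_tsub_cancel_right] at hbound
  nlinarith

theorem card_mul_choose_le {F : Finset (Finset (Fin n))} {r k u : ℕ}
    (hunif : ∀ A ∈ F, #A = k) (hF : ¬ ContainsOneFocalFamily F r) (hr : 2 ≤ r)
    (hu : (r - 1) * u ≤ k) :
    #F * k.choose u ≤ (r - 1) * n.choose (k - u) := calc
  #F * k.choose u = ∑ _A ∈ F, k.choose u := by rw [sum_const, smul_eq_mul]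
  _ ≤ ∑ A ∈ F, (r - 1) * #(privateSubsets F (k - u) A) :=
    sum_le_sum fun A hA => choose_le_mul_card_privateSubsets hunif hF hr hu hA
  _ = (r - 1) * ∑ A ∈ F, #(privateSubsets F (k - u) A) := (mul_sum ..).symm
  _ ≤ (r - 1) * n.choose (k - u) := by
    simpa using Nat.mul_le_mul_left (r - 1) (sum_card_privateSubsets_le F (k - u))

end OneFocal

theorem Nat.ceil_sub_two_mul_div_sub_one {r : ℕ} (k : ℕ) (hr : 2 ≤ r) :
    ⌈((r : ℚ) - 2) * k / ((r : ℚ) - 1)⌉₊ = k - k / (r - 1) := by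
  have hr' : ((r - 1 : ℕ) : ℚ) = r - 1 := Nat.cast_pred (by omega)
  have hq : ((r : ℚ) - 2) * k / (r - 1) = k - (k : ℚ) / ((r - 1 : ℕ) : ℚ) := by
    have : (r : ℚ) - 1 ≠ 0 := by rw [← hr']; exact_mod_cast (by omega : r - 1 ≠ 0)
    rw [hr']
    field_simp
    ring
  have hfloor : ⌊(k : ℚ) / ((r - 1 : ℕ) : ℚ)⌋ = ((k / (r - 1) : ℕ) : ℤ) := by
    rw [← Nat.floor_div_eq_div (K := ℚ), Int.natCast_floor_eq_floor (by positivity)]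
  rw [hq, ← Int.ceil_toNat, sub_eq_neg_add, Int.ceil_add_natCast, Int.ceil_neg, hfloor]
  omega

theorem one_focal_uniform_upper_bound_general (r n k : ℕ) (hr : 3 ≤ r)
    (F : Finset (Finset (Fin n))) (hunif : ∀ A ∈ F, A.card = k)
    (hF : ¬ ContainsOneFocalFamily F r) :
    (F.card : ℝ) ≤
      ((r : ℝ) - 1) * (n.choose ⌈(((r : ℚ) - 2) * k) / ((r : ℚ) - 1)⌉₊ : ℝ)
        / (k.choose ⌈(((r : ℚ) - 2) * k) / ((r : ℚ) - 1)⌉₊ : ℝ) := by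
  rw [Nat.ceil_sub_two_mul_div_sub_one k (by omega), Nat.choose_symm (Nat.div_le_self k _),
    le_div_iff₀ (by exact_mod_cast Nat.choose_pos (Nat.div_le_self k _)),
    ← Nat.cast_pred (by omega)]
  exact_mod_cast card_mul_choose_le hunif hF (by omega) (Nat.mul_div_le k (r - 1))

/-- If `F` is a family of `k`-element subsets of `[n]` containing no 1-focal family of
size `r`, then `|F| ≤ (r-1)·C(n,⌈(r-2)k/(r-1)⌉)/C(k,⌈(r-2)k/(r-1)⌉)`. -/
theorem one_focal_uniform_upper_bound (r n k : ℕ) (hr : 3 ≤ r) (hk : k ≤ n)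
    (F : Finset (Finset (Fin n))) (hunif : ∀ A ∈ F, A.card = k)
    (hF : ¬ ContainsOneFocalFamily F r) :
    (F.card : ℝ) ≤
      ((r : ℝ) - 1) * (n.choose ⌈(((r : ℚ) - 2) * k) / ((r : ℚ) - 1)⌉₊ : ℝ)
        / (k.choose ⌈(((r : ℚ) - 2) * k) / ((r : ℚ) - 1)⌉₊ : ℝ) :=
  one_focal_uniform_upper_bound_general r n k hr F hunif hF
end
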